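/- arXiv:1606.00069 — 9 statements merged into one kernel-verified Lean document; each statement's English description precedes it below -/
import Mathlib

section
/- Let c be a real number and let φ : ℝ → ℝ be a smooth function. For every natural number k, the k-th derivative at r = 0 of the function r ↦ r²·φ''(r) + (3 − c)·r·φ'(r) − 2c·φ(r) equals (k − c)(k + 2) times the k-th derivative of φ at 0. (This is the indicial identity showing that the linearization of the singular Yamabe equation determines ∂_r^k φ|_{r=0} with factor (k − n)(k + 2), so that the recursion is obstructed exactly at order k = n.) -/
/-!
Differentiating the Euler operator `r²φ'' + a r φ' + b φ` gives the operator of the same shape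
with coefficients `(a + 2, a + b)`, applied to `φ'`. Iterating `k` times and evaluating at
`r = 0`, where the terms carrying a factor `r` vanish, leaves the indicial polynomial
`k (k - 1) + a k + b`; for `a = 3 - c`, `b = -2c` it factors as `(k - c)(k + 2)`.
-/

noncomputable def eulerOp (a b : ℝ) (φ : ℝ → ℝ) : ℝ → ℝ :=
  fun r => r ^ 2 * deriv (deriv φ) r + a * r * deriv φ r + b * φ r

theorem deriv_eulerOp (a b : ℝ) {φ : ℝ → ℝ} (hφ : ContDiff ℝ (⊤ : ℕ∞) φ) :
    deriv (eulerOp a b φ) = eulerOp (a + 2) (a + b) (deriv φ) := by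
  have hφ' : ContDiff ℝ (⊤ : ℕ∞) (deriv φ) := (contDiff_infty_iff_deriv.mp hφ).2
  have hφ'' : ContDiff ℝ (⊤ : ℕ∞) (deriv (deriv φ)) := (contDiff_infty_iff_deriv.mp hφ').2
  have hd : Differentiable ℝ φ := hφ.differentiable (by simp)
  have hd' : Differentiable ℝ (deriv φ) := hφ'.differentiable (by simp)
  have hd'' : Differentiable ℝ (deriv (deriv φ)) := hφ''.differentiable (by simp)
  funext r
  have hsq : HasDerivAt (fun r : ℝ => r ^ 2 * deriv (deriv φ) r)
      (2 * r * deriv (deriv φ) r + r ^ 2 * deriv (deriv (deriv φ)) r) r :=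
    ((hasDerivAt_pow 2 r).mul (hd'' r).hasDerivAt).congr_deriv (by ring)
  have hlin : HasDerivAt (fun r : ℝ => a * r * deriv φ r)
      (a * deriv φ r + a * r * deriv (deriv φ) r) r :=
    (((hasDerivAt_id r).const_mul a).mul (hd' r).hasDerivAt).congr_deriv (by simp)
  have hconst : HasDerivAt (fun r : ℝ => b * φ r) (b * deriv φ r) r :=
    (hd r).hasDerivAt.const_mul b
  refine ((hsq.add hlin).add hconst).deriv.trans ?_
  simp only [eulerOp]
  ring

theorem iteratedDeriv_eulerOp_zero (a b : ℝ) {φ : ℝ → ℝ} (hφ : ContDiff ℝ (⊤ : ℕ∞) φ) (k : ℕ) :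
    iteratedDeriv k (eulerOp a b φ) 0
      = ((k : ℝ) * ((k : ℝ) - 1) + a * k + b) * iteratedDeriv k φ 0 := by
  induction k generalizing a b φ with
  | zero => simp [eulerOp]
  | succ k ih =>
    rw [iteratedDeriv_succ', deriv_eulerOp a b hφ,
      ih _ _ (contDiff_infty_iff_deriv.mp hφ).2, ← iteratedDeriv_succ']
    push_cast
    ring

/-- indicial identity for the linearized singular Yamabe operator:
the k-th derivative at 0 of `r ↦ r²φ'' + (3 − c)rφ' − 2cφ` is `(k − c)(k + 2) φ⁽ᵏ⁾(0)`. -/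
theorem stmt0 (c : ℝ) (φ : ℝ → ℝ) (hφ : ContDiff ℝ (⊤ : ℕ∞) φ) (k : ℕ) :
    iteratedDeriv k
        (fun r : ℝ => r ^ 2 * deriv (deriv φ) r + (3 - c) * r * deriv φ r - 2 * c * φ r) 0
      = ((k : ℝ) - c) * ((k : ℝ) + 2) * iteratedDeriv k φ 0 := by
  have hop : (fun r : ℝ => r ^ 2 * deriv (deriv φ) r + (3 - c) * r * deriv φ r - 2 * c * φ r)
      = eulerOp (3 - c) (-(2 * c)) φ := by
    funext r
    simp only [eulerOp]
    ring
  rw [hop, iteratedDeriv_eulerOp_zero _ _ hφ k]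
  ring
end

section
/- Let n ≥ 1 be an integer, let a, ρ and T be C¹ real-valued functions on a neighborhood of 0 in ℝ with T(0) = 0 and T'(0) = 0, and let φ be a C² function on [0, δ) satisfying the radial singular Yamabe equation (1 + r·φ(r))·[r²·φ''(r) + 4r·φ'(r) + 2φ(r) + a(r)·(1 + 2r·φ(r) + r²·φ'(r)) + T(r)] − ((n+1)/2)·[2(r·φ'(r) + 2φ(r)) + r·(r·φ'(r) + 2φ(r))²] + (1/(2n))·r·(1 + r·φ(r))²·ρ(r) = 0 for all r ∈ [0, δ). Then 3(n − 1)·φ'(0) = a(0)²/n + a'(0) + ρ(0)/(2n). In particular, for n ≥ 2 the first derivative φ'(0) is uniquely determined, while for n = 1 the right-hand side must vanish. -/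
open Set Filter Topology

/-- for a C² solution `φ` of the radial singular Yamabe equation on `[0, δ)`,
with `a, ρ, T` C¹ near 0 and `T 0 = 0`, `T' 0 = 0`, one has
`3(n − 1) φ'(0) = a(0)²/n + a'(0) + ρ(0)/(2n)`. -/
theorem stmt2 (n : ℕ) (hn : 1 ≤ n) (δ : ℝ) (hδ : 0 < δ)
    (a ρ T a' ρ' T' : ℝ → ℝ) (U : Set ℝ) (hUo : IsOpen U) (hU0 : (0 : ℝ) ∈ U)
    (had : ∀ r ∈ U, HasDerivAt a (a' r) r) (hac : ContinuousOn a' U)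
    (hρd : ∀ r ∈ U, HasDerivAt ρ (ρ' r) r) (hρc : ContinuousOn ρ' U)
    (hTd : ∀ r ∈ U, HasDerivAt T (T' r) r) (hTc : ContinuousOn T' U)
    (hT0 : T 0 = 0) (hT'0 : T' 0 = 0)
    (φ φ' φ'' : ℝ → ℝ)
    (hφd : ∀ r ∈ Ico (0 : ℝ) δ, HasDerivWithinAt φ (φ' r) (Ico 0 δ) r)
    (hφd' : ∀ r ∈ Ico (0 : ℝ) δ, HasDerivWithinAt φ' (φ'' r) (Ico 0 δ) r)
    (hφ'' : ContinuousOn φ'' (Ico 0 δ))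
    (heq : ∀ r ∈ Ico (0 : ℝ) δ,
      (1 + r * φ r) * (r ^ 2 * φ'' r + 4 * r * φ' r + 2 * φ r
            + a r * (1 + 2 * r * φ r + r ^ 2 * φ' r) + T r)
        - ((n + 1 : ℝ) / 2) * (2 * (r * φ' r + 2 * φ r) + r * (r * φ' r + 2 * φ r) ^ 2)
        + (1 / (2 * n)) * r * (1 + r * φ r) ^ 2 * ρ r = 0) :
    3 * ((n : ℝ) - 1) * φ' 0 = (a 0) ^ 2 / n + a' 0 + ρ 0 / (2 * n) := by
  have h0s : (0:ℝ) ∈ Ico (0:ℝ) δ := ⟨le_refl 0, hδ⟩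
  have hud : UniqueDiffWithinAt ℝ (Ico (0:ℝ) δ) 0 := uniqueDiffOn_Ico 0 δ 0 h0s
  have hφ0 := hφd 0 h0s
  have hφ'0 := hφd' 0 h0s
  have ha0 : HasDerivWithinAt a (a' 0) (Ico (0:ℝ) δ) 0 := (had 0 hU0).hasDerivWithinAt
  have hρ0 : HasDerivWithinAt ρ (ρ' 0) (Ico (0:ℝ) δ) 0 := (hρd 0 hU0).hasDerivWithinAt
  have hTT : HasDerivWithinAt T (T' 0) (Ico (0:ℝ) δ) 0 := (hTd 0 hU0).hasDerivWithinAt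
  have hid : HasDerivWithinAt (fun r : ℝ => r) 1 (Ico (0:ℝ) δ) 0 := hasDerivWithinAt_id 0 _
  -- the r² φ'' term: derivative 0 at 0 using only continuity of φ''
  have hsq : HasDerivWithinAt (fun r : ℝ => r^2 * φ'' r) 0 (Ico (0:ℝ) δ) 0 := by
    rw [hasDerivWithinAt_iff_tendsto_slope]
    have hc : ContinuousWithinAt (fun r : ℝ => r * φ'' r) (Ico (0:ℝ) δ) 0 :=
      (continuousWithinAt_id).mul (hφ'' 0 h0s)
    have h1 : Tendsto (fun r : ℝ => r * φ'' r) (𝓝[(Ico (0:ℝ) δ) \ {0}] 0) (𝓝 0) := by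
      have h : Tendsto (fun r : ℝ => r * φ'' r) (𝓝[(Ico (0:ℝ) δ) \ {0}] 0)
          (𝓝 ((0:ℝ) * φ'' 0)) := hc.mono diff_subset
      simpa using h
    refine h1.congr' ?_ |>.mono_left le_rfl
    filter_upwards [self_mem_nhdsWithin] with r hr
    have hr0 : r ≠ 0 := hr.2
    simp only [slope_def_field]
    field_simp
    ring
  have hB := (hid.mul hφ0).const_add 1
  have hW := (((hid.const_mul 2).mul hφ0).const_add 1).add ((hid.pow 2).mul hφ'0)
  have hQ := (((hsq.add ((hid.const_mul 4).mul hφ'0)).add (hφ0.const_mul 2)).add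
      (ha0.mul hW)).add hTT
  have hS := (hid.mul hφ'0).add (hφ0.const_mul 2)
  have hT2 := ((hS.const_mul 2).add (hid.mul (hS.pow 2))).const_mul ((n + 1 : ℝ) / 2)
  have hT3 := ((hid.const_mul (1 / (2 * (n:ℝ)))).mul (hB.pow 2)).mul hρ0
  have hG := ((hB.mul hQ).sub hT2).add hT3
  have hF : HasDerivWithinAt (fun r =>
      (1 + r * φ r) * (r ^ 2 * φ'' r + 4 * r * φ' r + 2 * φ r
            + a r * (1 + 2 * r * φ r + r ^ 2 * φ' r) + T r)
        - ((n + 1 : ℝ) / 2) * (2 * (r * φ' r + 2 * φ r) + r * (r * φ' r + 2 * φ r) ^ 2)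
        + (1 / (2 * n)) * r * (1 + r * φ r) ^ 2 * ρ r) _ (Ico (0:ℝ) δ) 0 :=
    hG.congr (fun r _ => by simp only [Pi.mul_apply, Pi.add_apply, Pi.sub_apply, Pi.pow_apply]) (by simp only [Pi.mul_apply, Pi.add_apply, Pi.sub_apply, Pi.pow_apply])
  have hzero : HasDerivWithinAt (fun r =>
      (1 + r * φ r) * (r ^ 2 * φ'' r + 4 * r * φ' r + 2 * φ r
            + a r * (1 + 2 * r * φ r + r ^ 2 * φ' r) + T r)
        - ((n + 1 : ℝ) / 2) * (2 * (r * φ' r + 2 * φ r) + r * (r * φ' r + 2 * φ r) ^ 2)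
        + (1 / (2 * n)) * r * (1 + r * φ r) ^ 2 * ρ r) 0 (Ico (0:ℝ) δ) 0 :=
    (hasDerivWithinAt_const 0 (Ico (0:ℝ) δ) (0:ℝ)).congr (fun r hr => heq r hr) (heq 0 h0s)
  have key := (hF.derivWithin hud).symm.trans (hzero.derivWithin hud)
  simp only [hT0, hT'0] at key
  have hn' : (n:ℝ) ≠ 0 := Nat.cast_ne_zero.mpr (by omega)
  have hA : a 0 = 2 * n * φ 0 := by linear_combination heq 0 h0s - hT0
  rw [hA] at key
  have hgoal : 3 * ((n : ℝ) - 1) * φ' 0 = 4 * n * (φ 0)^2 + a' 0 + ρ 0 / (2 * n) := by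
    simp only [Pi.mul_apply, Pi.add_apply, Pi.sub_apply, Pi.pow_apply, hT0, hT'0, hA] at key
    linear_combination -key
  rw [hA, hgoal]
  field_simp
  ring
end

section
/- Let n ≥ 2 be an integer, m ≥ 1, and let h : ℝ → Mat_{m×m}(ℝ) be C² near 0 with det h(0) > 0, h'(0) = −2L, and h''(0) = −2W + 2·L·h(0)⁻¹·L for matrices L, W. Set H := tr(h(0)⁻¹L), σ := tr((h(0)⁻¹L)²), σ̊ := σ − H²/n. Let ρ̄ and R be real numbers satisfying the Gauss-equation identity tr(h(0)⁻¹W) = (1/2)(ρ̄ − R − σ + H²). Let φ be a C² real-valued function near 0 with φ(0) = −H/(2n) and φ'(0) = (1/(3(n−1)))·[((1−n)/(2n))·(ρ̄ + H²) + (1/2)·(R − σ̊)]. Then the function G(r) := (1 + r·φ(r))^{−(n+1)} · √(det h(r)/det h(0)) satisfies (1/2)·G''(0) = ((n−5)/(12(n−1)))·(R − σ̊) + ((n−2)/(24n²))·((n−3)·H² − 2n·ρ̄). That is, the second singular Yamabe renormalized volume coefficient is v^{(2)} = ((n−5)/(12(n−1)))(R − |L̊|²) + ((n−2)/(24n²))((n−3)H²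 − 2nR̄); in particular for n = 2, v^{(2)} = (1/4)(|L̊|² − R). -/
/-!
Write `G = P · S` with `P = (1 + rφ)^{-(n+1)}` and `S = (det h(r) / det h(0))^{1/2}`, so that
`G''(0) = P''(0) + 2 P'(0) S'(0) + S''(0)` by the chain and Leibniz rules. The derivatives of `S`
come from Jacobi's formula `(det h)' = det h · tr(h⁻¹h')` and `(h⁻¹)' = -h⁻¹h'h⁻¹`, which give
`(det h)'' / det h = tr(h⁻¹h')² - tr((h⁻¹h')²) + tr(h⁻¹h'')`; at `r = 0` the hypotheses express
these traces through `H`, `σ` and the Gauss identity, and the rest is algebra.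
-/

open Matrix Filter Topology

theorem Matrix.sum_det_updateRow_eq_det_mul_trace {R ι : Type*} [CommRing R] [Fintype ι]
    [DecidableEq ι] (A B : Matrix ι ι R) (hA : IsUnit A.det) :
    ∑ k, (A.updateRow k (B k)).det = A.det * trace (A⁻¹ * B) := by
  have hrow : ∀ k, (A.updateRow k (B k)).det = A.det * ∑ j, A⁻¹ j k * B k j := by
    intro k
    rw [← cramer_transpose_apply, ← det_smul_inv_vecMul_eq_cramer_transpose _ _ hA]
    simp [vecMul, dotProduct, Finset.mul_sum, mul_comm]
  simp only [hrow, ← Finset.mul_sum, trace, diag, mul_apply]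
  rw [Finset.sum_comm]

section

variable {𝕜 : Type*} [NontriviallyNormedField 𝕜]

def HasMatrixDerivAt {m n : Type*} (f : 𝕜 → Matrix m n 𝕜) (f' : Matrix m n 𝕜) (x : 𝕜) : Prop :=
  ∀ i j, HasDerivAt (fun t => f t i j) (f' i j) x

namespace HasMatrixDerivAt

variable {l m ι : Type*} {x : 𝕜}

theorem mul [Fintype ι] {f : 𝕜 → Matrix l ι 𝕜} {g : 𝕜 → Matrix ι m 𝕜} {f' : Matrix l ι 𝕜}
    {g' : Matrix ι m 𝕜} (hf : HasMatrixDerivAt f f' x) (hg : HasMatrixDerivAt g g' x) :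
    HasMatrixDerivAt (fun t => f t * g t) (f' * g x + f x * g') x := by
  intro i j
  simpa [mul_apply, Finset.sum_add_distrib] using
    HasDerivAt.fun_sum (u := Finset.univ) fun k _ => (hf i k).mul (hg k j)

variable {f : 𝕜 → Matrix ι ι 𝕜} {f' : Matrix ι ι 𝕜}

theorem trace [Fintype ι] (hf : HasMatrixDerivAt f f' x) :
    HasDerivAt (fun t => (f t).trace) f'.trace x :=
  HasDerivAt.fun_sum fun i _ => hf i i

theorem updateRow_const [DecidableEq ι] (hf : HasMatrixDerivAt f f' x) (k : ι) (b : ι → 𝕜) :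
    HasMatrixDerivAt (fun t => (f t).updateRow k b) (f'.updateRow k 0) x := by
  intro i j
  by_cases hik : i = k
  · subst hik
    simpa using hasDerivAt_const x (b j)
  · simpa [updateRow_ne hik] using hf i j

theorem det [Fintype ι] [DecidableEq ι] (hf : HasMatrixDerivAt f f' x) :
    HasDerivAt (fun t => (f t).det) (∑ k, ((f x).updateRow k (f' k)).det) x := by
  let D : ContinuousMultilinearMap 𝕜 (fun _ : ι => ι → 𝕜) 𝕜 :=
    { (detRowAlternating : (ι → 𝕜) [⋀^ι]→ₗ[𝕜] 𝕜).toMultilinearMap with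
      cont := continuous_id.matrix_det }
  have hrows : HasDerivAt (fun t => (f t : ι → ι → 𝕜)) (f' : ι → ι → 𝕜) x :=
    hasDerivAt_pi.2 fun i => hasDerivAt_pi.2 fun j => hf i j
  have hD : D.linearDeriv (f x) f' = ∑ k, ((f x).updateRow k (f' k)).det :=
    ContinuousMultilinearMap.linearDeriv_apply _ _ _
  exact hD ▸ (D.hasFDerivAt (f x)).comp_hasDerivAt x hrows

theorem det_of_isUnit [Fintype ι] [DecidableEq ι] (hf : HasMatrixDerivAt f f' x)
    (hx : IsUnit (f x).det) :
    HasDerivAt (fun t => (f t).det) ((f x).det * Matrix.trace ((f x)⁻¹ * f')) x :=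
  (sum_det_updateRow_eq_det_mul_trace (f x) f' hx) ▸ hf.det

theorem inv [Fintype ι] [DecidableEq ι] (hf : HasMatrixDerivAt f f' x) (hx : IsUnit (f x).det) :
    HasMatrixDerivAt (fun t => (f t)⁻¹) (-((f x)⁻¹ * f' * (f x)⁻¹)) x := by
  have hdiff : ∀ i j, DifferentiableAt 𝕜 (fun t => (f t)⁻¹ i j) x := by
    intro i j
    simp only [inv_def, Matrix.smul_apply, smul_eq_mul, adjugate_apply, Ring.inverse_eq_inv]
    exact (hf.det.differentiableAt.inv hx.ne_zero).mul
      (hf.updateRow_const j (Pi.single i 1)).det.differentiableAt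
  set K : Matrix ι ι 𝕜 := Matrix.of fun i j => deriv (fun t => (f t)⁻¹ i j) x
  have hK : HasMatrixDerivAt (fun t => (f t)⁻¹) K x := fun i j => (hdiff i j).hasDerivAt
  have hunit : ∀ᶠ t in 𝓝 x, f t * (f t)⁻¹ = 1 :=
    (hf.det.continuousAt.eventually_ne hx.ne_zero).mono fun t ht =>
      mul_nonsing_inv _ (isUnit_iff_ne_zero.2 ht)
  have hsum : f' * (f x)⁻¹ + f x * K = 0 := by
    ext i j
    refine ((hf.mul hK) i j).unique ?_
    exact (hasDerivAt_const x ((1 : Matrix ι ι 𝕜) i j)).congr_of_eventuallyEq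
      (hunit.mono fun t ht => by simp only [ht])
  have hKval : K = -((f x)⁻¹ * f' * (f x)⁻¹) := by
    rw [← nonsing_inv_mul_cancel_left (f x) K hx, eq_neg_of_add_eq_zero_right hsum]
    simp [Matrix.mul_assoc]
  exact hKval ▸ hK

end HasMatrixDerivAt

def HasSecondDerivAt (f f' : 𝕜 → 𝕜) (f'' x : 𝕜) : Prop :=
  (∀ᶠ y in 𝓝 x, HasDerivAt f (f' y) y) ∧ HasDerivAt f' f'' x

namespace HasSecondDerivAt

variable {f f' g g' : 𝕜 → 𝕜} {f'' g'' x : 𝕜}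

theorem hasDerivAt (hf : HasSecondDerivAt f f' f'' x) : HasDerivAt f (f' x) x :=
  hf.1.self_of_nhds

theorem deriv_deriv (hf : HasSecondDerivAt f f' f'' x) : deriv (deriv f) x = f'' := by
  have hderiv : deriv f =ᶠ[𝓝 x] f' := hf.1.mono fun _ hy => hy.deriv
  rw [hderiv.deriv_eq, hf.2.deriv]

theorem const_add (hf : HasSecondDerivAt f f' f'' x) (c : 𝕜) :
    HasSecondDerivAt (fun y => c + f y) f' f'' x :=
  ⟨hf.1.mono fun _ hy => hy.const_add c, hf.2⟩

theorem div_const (hf : HasSecondDerivAt f f' f'' x) (c : 𝕜) :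
    HasSecondDerivAt (fun y => f y / c) (fun y => f' y / c) (f'' / c) x :=
  ⟨hf.1.mono fun _ hy => hy.div_const c, hf.2.div_const c⟩

theorem mul (hf : HasSecondDerivAt f f' f'' x) (hg : HasSecondDerivAt g g' g'' x) :
    HasSecondDerivAt (fun y => f y * g y) (fun y => f' y * g y + f y * g' y)
      (f'' * g x + 2 * (f' x * g' x) + f x * g'') x := by
  refine ⟨(hf.1.and hg.1).mono fun _ hy => hy.1.mul hy.2, ?_⟩
  exact ((hf.2.mul hg.hasDerivAt).add (hf.hasDerivAt.mul hg.2)).congr_deriv (by ring)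

theorem comp (hg : HasSecondDerivAt g g' g'' (f x)) (hf : HasSecondDerivAt f f' f'' x) :
    HasSecondDerivAt (fun y => g (f y)) (fun y => g' (f y) * f' y)
      (g'' * f' x ^ 2 + g' (f x) * f'') x := by
  have hnear : ∀ᶠ y in 𝓝 x, HasDerivAt g (g' (f y)) (f y) :=
    hf.hasDerivAt.continuousAt.eventually hg.1
  refine ⟨(hnear.and hf.1).mono fun y hy => hy.1.comp y hy.2, ?_⟩
  exact ((hg.2.comp x hf.hasDerivAt).mul hf.2).congr_deriv
    (by simp only [Function.comp_apply]; ring)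

end HasSecondDerivAt

theorem hasSecondDerivAt_id (x : 𝕜) : HasSecondDerivAt id (fun _ => 1) 0 x :=
  ⟨Eventually.of_forall hasDerivAt_id, hasDerivAt_const x 1⟩

theorem hasSecondDerivAt_zpow (k : ℤ) {x : 𝕜} (hx : x ≠ 0) :
    HasSecondDerivAt (fun y : 𝕜 => y ^ k) (fun y => (k : 𝕜) * y ^ (k - 1))
      ((k : 𝕜) * (((k - 1 : ℤ) : 𝕜) * x ^ (k - 1 - 1))) x :=
  ⟨(eventually_ne_nhds hx).mono fun y hy => hasDerivAt_zpow k y (Or.inl hy),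
    (hasDerivAt_zpow (k - 1) x (Or.inl hx)).const_mul _⟩

theorem hasSecondDerivAt_rpow_const (p : ℝ) {x : ℝ} (hx : 0 < x) :
    HasSecondDerivAt (fun y => y ^ p) (fun y => p * y ^ (p - 1))
      (p * ((p - 1) * x ^ (p - 1 - 1))) x :=
  ⟨(eventually_gt_nhds hx).mono fun _ hy => Real.hasDerivAt_rpow_const (Or.inl hy.ne'),
    (Real.hasDerivAt_rpow_const (Or.inl hx.ne')).const_mul p⟩

theorem HasMatrixDerivAt.hasSecondDerivAt_det {ι : Type*} [Fintype ι] [DecidableEq ι]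
    {f f' : 𝕜 → Matrix ι ι 𝕜} {f'' : Matrix ι ι 𝕜} {x : 𝕜}
    (hf : ∀ᶠ y in 𝓝 x, HasMatrixDerivAt f (f' y) y) (hf' : HasMatrixDerivAt f' f'' x)
    (hx : IsUnit (f x).det) :
    HasSecondDerivAt (fun t => (f t).det) (fun t => (f t).det * Matrix.trace ((f t)⁻¹ * f' t))
      ((f x).det * (Matrix.trace ((f x)⁻¹ * f' x) ^ 2 - Matrix.trace (((f x)⁻¹ * f' x) ^ 2)
        + Matrix.trace ((f x)⁻¹ * f''))) x := by
  have hfx := hf.self_of_nhds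
  have hunit : ∀ᶠ y in 𝓝 x, IsUnit (f y).det :=
    (hfx.det.continuousAt.eventually_ne hx.ne_zero).mono fun _ hy => isUnit_iff_ne_zero.2 hy
  refine ⟨(hf.and hunit).mono fun _ hy => hy.1.det_of_isUnit hy.2, ?_⟩
  refine ((hfx.det_of_isUnit hx).mul ((hfx.inv hx).mul hf').trace).congr_deriv ?_
  simp only [pow_two, Matrix.neg_mul, Matrix.trace_add, Matrix.trace_neg, Matrix.mul_assoc]
  ring

end

theorem stmt5_general (n : ℕ) (hn : 2 ≤ n) (m : ℕ)
    (h h' h'' : ℝ → Matrix (Fin m) (Fin m) ℝ)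
    (U : Set ℝ) (hUo : IsOpen U) (hU0 : (0 : ℝ) ∈ U)
    (hd : ∀ r ∈ U, ∀ i j, HasDerivAt (fun t => h t i j) (h' r i j) r)
    (hd' : ∀ r ∈ U, ∀ i j, HasDerivAt (fun t => h' t i j) (h'' r i j) r)
    (hdet : 0 < (h 0).det)
    (L W : Matrix (Fin m) (Fin m) ℝ)
    (hL : h' 0 = (-2 : ℝ) • L)
    (hW : h'' 0 = (-2 : ℝ) • W + (2 : ℝ) • (L * (h 0)⁻¹ * L))
    (H σ σc : ℝ)
    (hH : H = Matrix.trace ((h 0)⁻¹ * L))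
    (hσ : σ = Matrix.trace (((h 0)⁻¹ * L) ^ 2))
    (hσc : σc = σ - H ^ 2 / n)
    (ρb R : ℝ)
    (hGauss : Matrix.trace ((h 0)⁻¹ * W) = (1 / 2) * (ρb - R - σ + H ^ 2))
    (φ φ' φ'' : ℝ → ℝ)
    (hφd : ∀ r ∈ U, HasDerivAt φ (φ' r) r)
    (hφd' : ∀ r ∈ U, HasDerivAt φ' (φ'' r) r)
    (hφ0 : φ 0 = -H / (2 * n))
    (hφ1 : φ' 0 = (1 / (3 * ((n : ℝ) - 1)))
      * (((1 - (n : ℝ)) / (2 * n)) * (ρb + H ^ 2) + (1 / 2) * (R - σc)))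
    (G : ℝ → ℝ)
    (hG : G = fun r => ((1 + r * φ r) ^ (n + 1))⁻¹ * Real.sqrt ((h r).det / (h 0).det)) :
    (1 / 2) * deriv (deriv G) 0
      = (((n : ℝ) - 5) / (12 * ((n : ℝ) - 1))) * (R - σc)
        + (((n : ℝ) - 2) / (24 * (n : ℝ) ^ 2)) * (((n : ℝ) - 3) * H ^ 2 - 2 * n * ρb) := by
  have hU : ∀ᶠ r in 𝓝 0, r ∈ U := hUo.mem_nhds hU0
  have hφ : HasSecondDerivAt φ φ' (φ'' 0) 0 := ⟨hU.mono hφd, hφd' 0 hU0⟩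
  have hq := ((hasSecondDerivAt_id 0).mul hφ).const_add 1
  have hP := (hasSecondDerivAt_zpow (-(n + 1 : ℕ) : ℤ) (by simp)).comp hq
  have hQ := (HasMatrixDerivAt.hasSecondDerivAt_det (hU.mono hd) (hd' 0 hU0)
    (isUnit_iff_ne_zero.2 hdet.ne')).div_const (h 0).det
  have hS := (hasSecondDerivAt_rpow_const (1 / 2) (by simp [hdet.ne'])).comp hQ
  have hGPS : G = fun r => (1 + id r * φ r) ^ (-(n + 1 : ℕ) : ℤ)
      * ((h r).det / (h 0).det) ^ (1 / 2 : ℝ) := by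
    simp only [hG, _root_.zpow_neg, zpow_natCast, Real.sqrt_eq_rpow, id]
  have htr1 : Matrix.trace ((h 0)⁻¹ * h' 0) = -2 * H := by
    rw [hL, Matrix.mul_smul, Matrix.trace_smul, hH, smul_eq_mul]
  have htr2 : Matrix.trace (((h 0)⁻¹ * h' 0) ^ 2) = 4 * σ := by
    rw [hL, Matrix.mul_smul, smul_pow, Matrix.trace_smul, hσ, smul_eq_mul]; norm_num
  have htr3 : Matrix.trace ((h 0)⁻¹ * h'' 0) = -2 * Matrix.trace ((h 0)⁻¹ * W) + 2 * σ := by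
    rw [hW, hσ, Matrix.mul_add, Matrix.trace_add, Matrix.mul_smul, Matrix.mul_smul,
      Matrix.trace_smul, Matrix.trace_smul, pow_two]
    simp only [smul_eq_mul, Matrix.mul_assoc]
  rw [hGPS, (hP.mul hS).deriv_deriv]
  simp only [id, zero_mul, add_zero, _root_.one_zpow, div_self hdet.ne', Real.one_rpow, mul_one]
  rw [htr1, htr2, htr3, hGauss, hφ0, hφ1, hσc]
  have hn0 : (n : ℝ) ≠ 0 := by positivity
  have hn1 : (n : ℝ) - 1 ≠ 0 := by
    have : (2 : ℝ) ≤ n := by exact_mod_cast hn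
    linarith
  push_cast
  field_simp
  ring

/-- the second singular Yamabe renormalized volume coefficient:
`v⁽²⁾ = ½ G''(0) = ((n−5)/(12(n−1)))(R − |L̊|²) + ((n−2)/(24n²))((n−3)H² − 2nR̄)`,
where `G(r) = (1 + rφ(r))^{−(n+1)} √(det h(r)/det h(0))`, `h'(0) = −2L`,
`h''(0) = −2W + 2L h(0)⁻¹ L`, `H = tr(h(0)⁻¹L)`, `σ = tr((h(0)⁻¹L)²)`, `σ̊ = σ − H²/n`,
the Gauss identity `tr(h(0)⁻¹W) = ½(ρ̄ − R − σ + H²)` holds, and `φ(0)`, `φ'(0)` are the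
singular Yamabe Taylor coefficients. -/
theorem stmt5 (n : ℕ) (hn : 2 ≤ n) (m : ℕ) (hm : 1 ≤ m)
    (h h' h'' : ℝ → Matrix (Fin m) (Fin m) ℝ)
    (U : Set ℝ) (hUo : IsOpen U) (hU0 : (0 : ℝ) ∈ U)
    (hd : ∀ r ∈ U, ∀ i j, HasDerivAt (fun t => h t i j) (h' r i j) r)
    (hd' : ∀ r ∈ U, ∀ i j, HasDerivAt (fun t => h' t i j) (h'' r i j) r)
    (hc : ∀ i j, ContinuousOn (fun r => h'' r i j) U)
    (hdet : 0 < (h 0).det)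
    (L W : Matrix (Fin m) (Fin m) ℝ)
    (hL : h' 0 = (-2 : ℝ) • L)
    (hW : h'' 0 = (-2 : ℝ) • W + (2 : ℝ) • (L * (h 0)⁻¹ * L))
    (H σ σc : ℝ)
    (hH : H = Matrix.trace ((h 0)⁻¹ * L))
    (hσ : σ = Matrix.trace (((h 0)⁻¹ * L) ^ 2))
    (hσc : σc = σ - H ^ 2 / n)
    (ρb R : ℝ)
    (hGauss : Matrix.trace ((h 0)⁻¹ * W) = (1 / 2) * (ρb - R - σ + H ^ 2))
    (φ φ' φ'' : ℝ → ℝ)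
    (hφd : ∀ r ∈ U, HasDerivAt φ (φ' r) r)
    (hφd' : ∀ r ∈ U, HasDerivAt φ' (φ'' r) r)
    (hφc : ContinuousOn φ'' U)
    (hφ0 : φ 0 = -H / (2 * n))
    (hφ1 : φ' 0 = (1 / (3 * ((n : ℝ) - 1)))
      * (((1 - (n : ℝ)) / (2 * n)) * (ρb + H ^ 2) + (1 / 2) * (R - σc)))
    (G : ℝ → ℝ)
    (hG : G = fun r => ((1 + r * φ r) ^ (n + 1))⁻¹ * Real.sqrt ((h r).det / (h 0).det)) :
    (1 / 2) * deriv (deriv G) 0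
      = (((n : ℝ) - 5) / (12 * ((n : ℝ) - 1))) * (R - σc)
        + (((n : ℝ) - 2) / (24 * (n : ℝ) ^ 2)) * (((n : ℝ) - 3) * H ^ 2 - 2 * n * ρb) :=
  stmt5_general n hn m h h' h'' U hUo hU0 hd hd' hdet L W hL hW H σ σc hH hσ hσc ρb R hGauss φ φ'
    φ'' hφd hφd' hφ0 hφ1 G hG
end

section
/- Let ω, Υ, Q be real-valued functions on a neighborhood of 0 in ℝ, with ω and Υ C² and Q continuous, satisfying the radial eikonal equation 2r·Υ'(r) + r²·(Υ'(r)² + Q(r)) = e^{2(ω(r) − Υ(r))} − 1 for all r near 0. Then Υ(0) = ω(0), Υ'(0) = (1/2)·ω'(0), and if moreover ω, Υ are C³ and Q is C¹, then Υ''(0) = (1/3)·[ω''(0) + (1/4)·ω'(0)² − Q(0)]. -/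
/-!
Write the equation as `F = G` with `F r = 2r Υ'(r) + r² p(r)`, `p = Υ'² + Q`, and
`G = exp (2(ω - Υ)) - 1`. At `r = 0` it says `G 0 = 0`, i.e. `Υ 0 = ω 0`. Every term of `F`,
and of `F' - 2Υ'`, carries a factor `r`, and `r ↦ r c(r)` has derivative `c 0` at `0` as soon as
`c` is continuous there. Hence comparing `F'(0) = 2Υ'(0)` with `G'(0) = 2(ω' - Υ')(0)` gives
`Υ'(0)`, and comparing `F''(0) = 4Υ''(0) + 2p(0)` with
`G''(0) = 4(ω' - Υ')(0)² + 2(ω'' - Υ'')(0)` gives `Υ''(0)`.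
-/

open Filter Topology

theorem HasDerivAt.add_id_mul_of_continuousAt {f c : ℝ → ℝ} {f' : ℝ} (hf : HasDerivAt f f' 0)
    (hc : ContinuousAt c 0) : HasDerivAt (fun r => f r + r * c r) (f' + c 0) 0 := by
  refine hf.add ?_
  rw [hasDerivAt_iff_tendsto_slope]
  refine (hc.tendsto.mono_left nhdsWithin_le_nhds).congr' ?_
  filter_upwards [self_mem_nhdsWithin] with r (hr : r ≠ 0)
  simp [slope_def_field, hr]

section TwoMulAddSqMul

variable {v p : ℝ → ℝ}

theorem hasDerivAt_two_mul_add_sq_mul {v' p' r : ℝ} (hv : HasDerivAt v v' r)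
    (hp : HasDerivAt p p' r) :
    HasDerivAt (fun x => 2 * x * v x + x ^ 2 * p x)
      (2 * v r + r * (2 * v' + 2 * p r + r * p')) r := by
  refine ((((hasDerivAt_id' r).const_mul 2).fun_mul hv).fun_add
    ((hasDerivAt_pow 2 r).fun_mul hp)).congr_deriv ?_
  norm_num
  ring

theorem hasDerivAt_two_mul_add_sq_mul_zero (hv : ContinuousAt v 0) (hp : ContinuousAt p 0) :
    HasDerivAt (fun x => 2 * x * v x + x ^ 2 * p x) (2 * v 0) 0 := by
  have hc : ContinuousAt (fun x => 2 * v x + x * p x) 0 := by fun_prop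
  convert (hasDerivAt_const (0 : ℝ) (0 : ℝ)).add_id_mul_of_continuousAt hc using 1
  · ext x
    ring
  · simp

theorem hasDerivAt_deriv_two_mul_add_sq_mul_zero {v' p' : ℝ → ℝ}
    (hv : ∀ᶠ r in 𝓝 0, HasDerivAt v (v' r) r) (hp : ∀ᶠ r in 𝓝 0, HasDerivAt p (p' r) r)
    (hv' : ContinuousAt v' 0) (hp' : ContinuousAt p' 0) :
    HasDerivAt (deriv fun x => 2 * x * v x + x ^ 2 * p x) (4 * v' 0 + 2 * p 0) 0 := by
  have hp0 := hp.self_of_nhds.continuousAt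
  have hc : ContinuousAt (fun r => 2 * v' r + 2 * p r + r * p' r) 0 := by fun_prop
  have hderiv : (deriv fun x => 2 * x * v x + x ^ 2 * p x)
      =ᶠ[𝓝 0] fun r => 2 * v r + r * (2 * v' r + 2 * p r + r * p' r) := by
    filter_upwards [hv, hp] with r hvr hpr using (hasDerivAt_two_mul_add_sq_mul hvr hpr).deriv
  refine ((hv.self_of_nhds.const_mul 2).add_id_mul_of_continuousAt hc
    |>.congr_of_eventuallyEq hderiv).congr_deriv ?_
  simp only [zero_mul, add_zero]
  ring

end TwoMulAddSqMul

theorem hasDerivAt_deriv_exp_sub_one_zero {u u' : ℝ → ℝ} {u'' : ℝ}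
    (hu : ∀ᶠ r in 𝓝 0, HasDerivAt u (u' r) r) (hu' : HasDerivAt u' u'' 0) (hu0 : u 0 = 0) :
    HasDerivAt (deriv fun x => Real.exp (u x) - 1) (u' 0 ^ 2 + u'') 0 := by
  have hderiv : (deriv fun x => Real.exp (u x) - 1) =ᶠ[𝓝 0] fun r => Real.exp (u r) * u' r := by
    filter_upwards [hu] with r hur using (hur.exp.sub_const 1).deriv
  refine ((hu.self_of_nhds.exp.mul hu').congr_of_eventuallyEq hderiv).congr_deriv ?_
  simp only [hu0, Real.exp_zero]
  ring

def RadialEikonal (ω Υ Q : ℝ → ℝ) (r : ℝ) : Prop :=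
  2 * r * deriv Υ r + r ^ 2 * ((deriv Υ r) ^ 2 + Q r) = Real.exp (2 * (ω r - Υ r)) - 1

section RadialEikonal

variable {ω Υ Q : ℝ → ℝ}

theorem RadialEikonal.eq_at_zero (h : RadialEikonal ω Υ Q 0) : Υ 0 = ω 0 := by
  have h1 : Real.exp (2 * (ω 0 - Υ 0)) = 1 := by
    simp only [RadialEikonal] at h
    linarith
  rw [Real.exp_eq_one_iff] at h1
  linarith

theorem deriv_zero_of_radialEikonal (h : ∀ᶠ r in 𝓝 0, RadialEikonal ω Υ Q r)
    (hω : DifferentiableAt ℝ ω 0) (hΥ : DifferentiableAt ℝ Υ 0)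
    (hΥ' : ContinuousAt (deriv Υ) 0) (hQ : ContinuousAt Q 0) :
    deriv Υ 0 = 1 / 2 * deriv ω 0 := by
  have h0 := h.self_of_nhds.eq_at_zero
  have hG : HasDerivAt (fun r => Real.exp (2 * (ω r - Υ r)) - 1)
      (2 * (deriv ω 0 - deriv Υ 0)) 0 := by
    simpa [h0] using ((hω.hasDerivAt.sub hΥ.hasDerivAt).const_mul 2).exp.sub_const 1
  have hF := hasDerivAt_two_mul_add_sq_mul_zero hΥ' ((hΥ'.pow 2).add hQ)
  have := hF.unique (hG.congr_of_eventuallyEq h)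
  linarith

theorem deriv_deriv_zero_of_radialEikonal (h : ∀ᶠ r in 𝓝 0, RadialEikonal ω Υ Q r)
    (hω : ∀ᶠ r in 𝓝 0, DifferentiableAt ℝ ω r) (hΥ : ∀ᶠ r in 𝓝 0, DifferentiableAt ℝ Υ r)
    (hΥ' : ∀ᶠ r in 𝓝 0, DifferentiableAt ℝ (deriv Υ) r)
    (hQ : ∀ᶠ r in 𝓝 0, DifferentiableAt ℝ Q r) (hω' : DifferentiableAt ℝ (deriv ω) 0)
    (hΥ'' : ContinuousAt (deriv (deriv Υ)) 0) (hQ' : ContinuousAt (deriv Q) 0) :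
    deriv (deriv Υ) 0 = 1 / 3 * (deriv (deriv ω) 0 + 1 / 4 * deriv ω 0 ^ 2 - Q 0) := by
  have hΥ'0 := hΥ'.self_of_nhds
  have h1 := deriv_zero_of_radialEikonal h hω.self_of_nhds hΥ.self_of_nhds
    hΥ'0.continuousAt hQ.self_of_nhds.continuousAt
  have hp : ∀ᶠ r in 𝓝 0, HasDerivAt (fun x => deriv Υ x ^ 2 + Q x)
      (2 * deriv Υ r * deriv (deriv Υ) r + deriv Q r) r := by
    filter_upwards [hΥ', hQ] with r hΥ'r hQr
    refine ((hΥ'r.hasDerivAt.fun_pow 2).fun_add hQr.hasDerivAt).congr_deriv ?_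
    norm_num
  have hF := hasDerivAt_deriv_two_mul_add_sq_mul_zero (hΥ'.mono fun r hr => hr.hasDerivAt) hp
    hΥ'' (by have := hΥ'0.continuousAt; fun_prop)
  have hu : ∀ᶠ r in 𝓝 0, HasDerivAt (fun x => 2 * (ω x - Υ x))
      (2 * (deriv ω r - deriv Υ r)) r := by
    filter_upwards [hω, hΥ] with r hωr hΥr
    exact (hωr.hasDerivAt.sub hΥr.hasDerivAt).const_mul 2
  have hG := hasDerivAt_deriv_exp_sub_one_zero hu ((hω'.hasDerivAt.sub hΥ'0.hasDerivAt).const_mul 2)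
    (by simp [h.self_of_nhds.eq_at_zero])
  have hFG : (fun x => 2 * x * deriv Υ x + x ^ 2 * (deriv Υ x ^ 2 + Q x))
      =ᶠ[𝓝 0] fun x => Real.exp (2 * (ω x - Υ x)) - 1 := h
  have := hF.unique (hG.congr_of_eventuallyEq hFG.deriv)
  rw [h1] at this
  linear_combination this / 6

end RadialEikonal

/-- the radial eikonal equation
`2rΥ' + r²(Υ'² + Q) = e^{2(ω − Υ)} − 1` near 0 forces `Υ(0) = ω(0)`, `Υ'(0) = ½ω'(0)`,
and, under one more degree of regularity, `Υ''(0) = ⅓[ω''(0) + ¼ω'(0)² − Q(0)]`. -/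
theorem stmt6 (ω Υ Q : ℝ → ℝ) (U : Set ℝ) (hUo : IsOpen U) (hU0 : (0 : ℝ) ∈ U)
    (hω : ContDiffOn ℝ 2 ω U) (hΥ : ContDiffOn ℝ 2 Υ U) (hQ : ContinuousOn Q U)
    (heq : ∀ r ∈ U, 2 * r * deriv Υ r + r ^ 2 * ((deriv Υ r) ^ 2 + Q r)
      = Real.exp (2 * (ω r - Υ r)) - 1) :
    Υ 0 = ω 0 ∧ deriv Υ 0 = (1 / 2) * deriv ω 0 ∧
      (ContDiffOn ℝ 3 ω U → ContDiffOn ℝ 3 Υ U → ContDiffOn ℝ 1 Q U →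
        deriv (deriv Υ) 0
          = (1 / 3) * (deriv (deriv ω) 0 + (1 / 4) * (deriv ω 0) ^ 2 - Q 0)) := by
  have hU : U ∈ 𝓝 0 := hUo.mem_nhds hU0
  have h : ∀ᶠ r in 𝓝 0, RadialEikonal ω Υ Q r := eventually_of_mem hU heq
  have hω' := hω.deriv_of_isOpen hUo (m := 1) (by norm_num)
  have hΥ' := hΥ.deriv_of_isOpen hUo (m := 1) (by norm_num)
  have hΥ'' := hΥ'.deriv_of_isOpen hUo (m := 0) (by norm_num)
  have hωd := (hω.differentiableOn (by norm_num)).eventually_differentiableAt hU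
  have hΥd := (hΥ.differentiableOn (by norm_num)).eventually_differentiableAt hU
  have hΥ'd := (hΥ'.differentiableOn one_ne_zero).eventually_differentiableAt hU
  refine ⟨h.self_of_nhds.eq_at_zero, deriv_zero_of_radialEikonal h hωd.self_of_nhds
    hΥd.self_of_nhds hΥ'd.self_of_nhds.continuousAt (hQ.continuousAt hU), fun _ _ hQ1 => ?_⟩
  have hQ' := hQ1.deriv_of_isOpen hUo (m := 0) (by norm_num)
  exact deriv_deriv_zero_of_radialEikonal h hωd hΥd hΥ'd
    ((hQ1.differentiableOn one_ne_zero).eventually_differentiableAt hU)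
    ((hω'.differentiableOn one_ne_zero).differentiableAt hU) (hΥ''.continuousOn.continuousAt hU)
    (hQ'.continuousOn.continuousAt hU)
end

section
/- Let Υ be a C³ real-valued function on a neighborhood of 0 in ℝ, and define f(r) = e^{Υ(r)}·r. Then f is a local diffeomorphism at 0 with f(0) = 0; let g be its local inverse. The function b defined by b(s) = g(s)/s for s ≠ 0 and b(0) = e^{−Υ(0)} is C² on a neighborhood of 0 and satisfies b'(0) = −Υ'(0)·e^{−2Υ(0)} and b''(0) = (3·Υ'(0)² − Υ''(0))·e^{−3Υ(0)}. -/
/-!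
By the inverse function theorem, `f r = e^{Υ r} r` (with `f' 0 = e^{Υ 0} ≠ 0`) has a `C³` local
inverse `g` with `g 0 = 0`. Dividing `s = f (g s) = e^{Υ (g s)} g s` by `s` shows that
`b = e^{-Υ ∘ g}` near `0`, including at `s = 0`; hence `b` is `C²` and its derivatives at `0` come
from the chain rule, once `g' 0 = 1 / f' 0` and `g'' 0 = -f'' 0 / f' 0 ^ 3` are obtained by
differentiating `f ∘ g = id` twice.
-/

open Filter Real Set
open scoped Topology

section SecondDerivative

variable {𝕜 : Type*} [NontriviallyNormedField 𝕜] {f g : 𝕜 → 𝕜} {x : 𝕜}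

theorem ContDiffAt.eventually_differentiableAt {E F : Type*} [NormedAddCommGroup E]
    [NormedSpace 𝕜 E] [NormedAddCommGroup F] [NormedSpace 𝕜 F] {φ : E → F} {a : E}
    {n : WithTop ℕ∞} (hφ : ContDiffAt 𝕜 n φ a) (hn : 1 ≤ n) :
    ∀ᶠ y in 𝓝 a, DifferentiableAt 𝕜 φ y :=
  ((hφ.of_le hn).eventually (by simp)).mono fun _ hy => hy.differentiableAt one_ne_zero

theorem ContDiffAt.hasDerivAt_deriv {F : Type*} [NormedAddCommGroup F] [NormedSpace 𝕜 F]
    {φ : 𝕜 → F} (hφ : ContDiffAt 𝕜 2 φ x) :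
    HasDerivAt (deriv φ) (deriv (deriv φ) x) x :=
  ((hφ.derivWithin (m := 1) (by norm_num)).differentiableAt one_ne_zero).hasDerivAt

theorem ContDiffAt.deriv_deriv_comp (hf : ContDiffAt 𝕜 2 f (g x)) (hg : ContDiffAt 𝕜 2 g x) :
    deriv (deriv (f ∘ g)) x =
      deriv (deriv f) (g x) * deriv g x ^ 2 + deriv f (g x) * deriv (deriv g) x := by
  have hderiv : deriv (f ∘ g) =ᶠ[𝓝 x] fun y => deriv f (g y) * deriv g y := by
    filter_upwards [hg.continuousAt.eventually (hf.eventually_differentiableAt one_le_two),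
      hg.eventually_differentiableAt one_le_two] with y hfy hgy
    exact deriv_comp y hfy hgy
  have H : HasDerivAt (fun y => deriv f (g y) * deriv g y)
      (deriv (deriv f) (g x) * deriv g x * deriv g x + deriv f (g x) * deriv (deriv g) x) x :=
    (hf.hasDerivAt_deriv.comp x (hg.differentiableAt two_ne_zero).hasDerivAt).mul
      hg.hasDerivAt_deriv
  rw [hderiv.deriv_eq, H.deriv]
  ring

theorem ContDiffAt.deriv_deriv_mul_id (hf : ContDiffAt 𝕜 2 f x) :
    deriv (deriv fun y => f y * y) x = deriv (deriv f) x * x + 2 * deriv f x := by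
  have hderiv : deriv (fun y => f y * y) =ᶠ[𝓝 x] fun y => deriv f y * y + f y := by
    filter_upwards [hf.eventually_differentiableAt one_le_two] with y hy
    exact (hy.hasDerivAt.mul (hasDerivAt_id' y)).deriv.trans (by rw [mul_one])
  have H : HasDerivAt (fun y => deriv f y * y + f y)
      (deriv (deriv f) x * x + deriv f x * 1 + deriv f x) x :=
    (hf.hasDerivAt_deriv.mul (hasDerivAt_id' x)).add (hf.differentiableAt two_ne_zero).hasDerivAt
  rw [hderiv.deriv_eq, H.deriv]
  ring

theorem deriv_mul_deriv_eq_one_of_rightInverse (hf : DifferentiableAt 𝕜 f (g x))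
    (hg : DifferentiableAt 𝕜 g x) (hfg : f ∘ g =ᶠ[𝓝 x] id) :
    deriv f (g x) * deriv g x = 1 := by
  rw [← deriv_comp x hf hg, hfg.deriv_eq, deriv_id]

theorem deriv_deriv_of_rightInverse (hf : ContDiffAt 𝕜 2 f (g x)) (hg : ContDiffAt 𝕜 2 g x)
    (hfg : f ∘ g =ᶠ[𝓝 x] id) :
    deriv (deriv g) x = -deriv (deriv f) (g x) / deriv f (g x) ^ 3 := by
  have hfg' := deriv_mul_deriv_eq_one_of_rightInverse (hf.differentiableAt two_ne_zero)
    (hg.differentiableAt two_ne_zero) hfg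
  have hf' : deriv f (g x) ≠ 0 := left_ne_zero_of_mul_eq_one hfg'
  have hfg'' := hf.deriv_deriv_comp hg
  rw [hfg.deriv.deriv_eq, deriv_id', deriv_const, eq_inv_of_mul_eq_one_right hfg'] at hfg''
  field_simp at hfg''
  rw [eq_div_iff (pow_ne_zero 3 hf')]
  linear_combination -hfg''

end SecondDerivative

theorem ContDiffAt.exists_localInverse {𝕜 : Type*} [RCLike 𝕜] {f : 𝕜 → 𝕜} {a : 𝕜}
    {n : WithTop ℕ∞} (hf : ContDiffAt 𝕜 n f a) (hn : n ≠ 0) (hf' : deriv f a ≠ 0) :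
    ∃ g : 𝕜 → 𝕜, g (f a) = a ∧ ContDiffAt 𝕜 n g (f a) ∧
      f ∘ g =ᶠ[𝓝 (f a)] id ∧ g ∘ f =ᶠ[𝓝 a] id := by
  have hfd := (hf.differentiableAt hn).hasDerivAt.hasFDerivAt_equiv hf'
  have hs := hf.hasStrictFDerivAt' hfd hn
  exact ⟨hf.localInverse hfd hn, hf.localInverse_apply_image hfd hn, hf.to_localInverse hfd hn,
    hs.eventually_right_inverse, hs.eventually_left_inverse⟩

section ExpMulId

variable {Υ g : ℝ → ℝ}

theorem deriv_exp_mul_id_zero (hΥ : DifferentiableAt ℝ Υ 0) :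
    deriv (fun r => exp (Υ r) * r) 0 = exp (Υ 0) :=
  (hΥ.hasDerivAt.exp.mul (hasDerivAt_id' 0)).deriv.trans (by simp)

theorem deriv_deriv_exp_mul_id_zero (hΥ : ContDiffAt ℝ 2 Υ 0) :
    deriv (deriv fun r => exp (Υ r) * r) 0 = 2 * exp (Υ 0) * deriv Υ 0 := by
  have hu : ContDiffAt ℝ 2 (fun r => exp (Υ r)) 0 := contDiff_exp.contDiffAt.comp 0 hΥ
  rw [hu.deriv_deriv_mul_id, mul_zero, zero_add, deriv_exp (hΥ.differentiableAt two_ne_zero),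
    mul_assoc]

theorem deriv_deriv_exp_neg {φ : ℝ → ℝ} {x : ℝ} (hφ : ContDiffAt ℝ 2 φ x) :
    deriv (deriv fun s => exp (-φ s)) x = exp (-φ x) * (deriv φ x ^ 2 - deriv (deriv φ) x) := by
  rw [show (fun s => exp (-φ s)) = exp ∘ fun s => -φ s from rfl,
    contDiff_exp.contDiffAt.deriv_deriv_comp hφ.neg, deriv.fun_neg', deriv.fun_neg, Real.deriv_exp,
    Real.deriv_exp]
  ring

theorem deriv_rightInverse_exp_mul_id (hΥ : DifferentiableAt ℝ Υ 0)
    (hg : DifferentiableAt ℝ g 0) (hg0 : g 0 = 0)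
    (hfg : (fun r => exp (Υ r) * r) ∘ g =ᶠ[𝓝 0] id) :
    deriv g 0 = exp (-Υ 0) := by
  have hf : DifferentiableAt ℝ (fun r => exp (Υ r) * r) (g 0) := by
    rw [hg0]; exact hΥ.exp.mul differentiableAt_id
  have h := deriv_mul_deriv_eq_one_of_rightInverse hf hg hfg
  rw [hg0, deriv_exp_mul_id_zero hΥ] at h
  rw [exp_neg]
  exact eq_inv_of_mul_eq_one_right h

theorem deriv_deriv_rightInverse_exp_mul_id (hΥ : ContDiffAt ℝ 2 Υ 0)
    (hg : ContDiffAt ℝ 2 g 0) (hg0 : g 0 = 0)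
    (hfg : (fun r => exp (Υ r) * r) ∘ g =ᶠ[𝓝 0] id) :
    deriv (deriv g) 0 = -2 * deriv Υ 0 * exp (-Υ 0) ^ 2 := by
  have hf : ContDiffAt ℝ 2 (fun r => exp (Υ r) * r) (g 0) := by
    rw [hg0]; exact (contDiff_exp.contDiffAt.comp 0 hΥ).mul contDiffAt_id
  rw [deriv_deriv_of_rightInverse hf hg hfg, hg0, deriv_deriv_exp_mul_id_zero hΥ,
    deriv_exp_mul_id_zero (hΥ.differentiableAt two_ne_zero), exp_neg]
  field_simp

theorem deriv_exp_neg_comp_rightInverse_exp_mul_id (hΥ : DifferentiableAt ℝ Υ 0)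
    (hg : DifferentiableAt ℝ g 0) (hg0 : g 0 = 0)
    (hfg : (fun r => exp (Υ r) * r) ∘ g =ᶠ[𝓝 0] id) :
    deriv (fun s => exp (-Υ (g s))) 0 = -deriv Υ 0 * exp (-2 * Υ 0) := by
  have hΥg : DifferentiableAt ℝ Υ (g 0) := by rwa [hg0]
  refine ((hΥg.comp 0 hg).hasDerivAt.neg.exp.deriv).trans ?_
  rw [deriv_comp 0 hΥg hg, Pi.neg_apply, Function.comp_apply, hg0,
    deriv_rightInverse_exp_mul_id hΥ hg hg0 hfg, show -2 * Υ 0 = -Υ 0 + -Υ 0 by ring, exp_add]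
  ring

theorem deriv_deriv_exp_neg_comp_rightInverse_exp_mul_id (hΥ : ContDiffAt ℝ 2 Υ 0)
    (hg : ContDiffAt ℝ 2 g 0) (hg0 : g 0 = 0)
    (hfg : (fun r => exp (Υ r) * r) ∘ g =ᶠ[𝓝 0] id) :
    deriv (deriv fun s => exp (-Υ (g s))) 0 =
      (3 * deriv Υ 0 ^ 2 - deriv (deriv Υ) 0) * exp (-3 * Υ 0) := by
  have hΥg : ContDiffAt ℝ 2 Υ (g 0) := by rwa [hg0]
  refine (deriv_deriv_exp_neg (hΥg.comp 0 hg)).trans ?_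
  rw [hΥg.deriv_deriv_comp hg,
    deriv_comp 0 (hΥg.differentiableAt two_ne_zero) (hg.differentiableAt two_ne_zero),
    Function.comp_apply, hg0, deriv_rightInverse_exp_mul_id (hΥ.differentiableAt two_ne_zero)
      (hg.differentiableAt two_ne_zero) hg0 hfg,
    deriv_deriv_rightInverse_exp_mul_id hΥ hg hg0 hfg,
    show -3 * Υ 0 = -Υ 0 + -Υ 0 + -Υ 0 by ring, exp_add, exp_add]
  ring

theorem div_eq_exp_neg_of_exp_mul_eq {a r s : ℝ} (h : exp a * r = s) (hs : s ≠ 0) :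
    r / s = exp (-a) := by
  rw [div_eq_iff hs, ← h, ← mul_assoc, ← exp_add, neg_add_cancel, exp_zero, one_mul]

theorem eqOn_ite_div_exp_neg_comp {V : Set ℝ} (hg0 : g 0 = 0)
    (hfg : ∀ s ∈ V, exp (Υ (g s)) * g s = s) :
    EqOn (fun s => if s = 0 then exp (-Υ 0) else g s / s) (fun s => exp (-Υ (g s))) V := by
  intro s hs
  by_cases hs0 : s = 0
  · simp [hs0, hg0]
  · simp only [if_neg hs0]
    exact div_eq_exp_neg_of_exp_mul_eq (hfg s hs) hs0

end ExpMulId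

/-- inverting `f(r) = e^{Υ(r)} r` locally as `r = s·b(s)` (i.e. `b(s) = g(s)/s`
for the local inverse `g`, with `b(0) = e^{−Υ(0)}`) yields a C² function `b` near 0 with
`b'(0) = −Υ'(0)e^{−2Υ(0)}` and `b''(0) = (3Υ'(0)² − Υ''(0))e^{−3Υ(0)}`. -/
theorem stmt7 (Υ : ℝ → ℝ) (U : Set ℝ) (hUo : IsOpen U) (hU0 : (0 : ℝ) ∈ U)
    (hΥ : ContDiffOn ℝ 3 Υ U)
    (f : ℝ → ℝ) (hf : f = fun r => Real.exp (Υ r) * r) :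
    f 0 = 0 ∧
    ∃ g : ℝ → ℝ, ∃ V : Set ℝ, IsOpen V ∧ (0 : ℝ) ∈ V ∧
      (∀ s ∈ V, f (g s) = s) ∧ (∀ r ∈ V, g (f r) = r) ∧ g 0 = 0 ∧
      ∀ b : ℝ → ℝ, (b = fun s => if s = 0 then Real.exp (-Υ 0) else g s / s) →
        ContDiffOn ℝ 2 b V ∧
        deriv b 0 = -deriv Υ 0 * Real.exp (-2 * Υ 0) ∧
        deriv (deriv b) 0 = (3 * (deriv Υ 0) ^ 2 - deriv (deriv Υ) 0) * Real.exp (-3 * Υ 0) := by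
  subst hf
  have hΥ0 : ContDiffAt ℝ 3 Υ 0 := hΥ.contDiffAt (hUo.mem_nhds hU0)
  have hf : ContDiffAt ℝ 3 (fun r => exp (Υ r) * r) 0 :=
    (contDiff_exp.contDiffAt.comp 0 hΥ0).mul contDiffAt_id
  obtain ⟨g, hg0, hgC, hfg, hgf⟩ := hf.exists_localInverse (by norm_num)
      (by rw [deriv_exp_mul_id_zero (hΥ0.differentiableAt (by norm_num))]; positivity)
  simp only [mul_zero] at hg0 hgC hfg
  obtain ⟨V, hV, hVo, hV0⟩ := mem_nhds_iff.mp <| hfg.and <| hgf.and <|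
    (hgC.eventually (by simp)).and <| hgC.continuousAt.preimage_mem_nhds (hg0 ▸ hUo.mem_nhds hU0)
  refine ⟨by simp, g, V, hVo, hV0, fun s hs => (hV hs).1, fun r hr => (hV hr).2.1, hg0, ?_⟩
  rintro b rfl
  have hb := eqOn_ite_div_exp_neg_comp hg0 fun s hs => (hV hs).1
  have hb0 := eventuallyEq_of_mem (hVo.mem_nhds hV0) hb
  have hΥ2 : ContDiffAt ℝ 2 Υ 0 := hΥ0.of_le (by norm_num)
  have hg2 : ContDiffAt ℝ 2 g 0 := hgC.of_le (by norm_num)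
  refine ⟨ContDiffOn.congr (fun s hs => ?_) hb, ?_, ?_⟩
  · have hΥs := hΥ.contDiffAt (hUo.mem_nhds (hV hs).2.2.2)
    exact (contDiff_exp.contDiffAt.comp s (hΥs.neg.comp s (hV hs).2.2.1)).contDiffWithinAt.of_le
      (by norm_num)
  · rw [hb0.deriv_eq, deriv_exp_neg_comp_rightInverse_exp_mul_id
      (hΥ2.differentiableAt two_ne_zero) (hg2.differentiableAt two_ne_zero) hg0 hfg]
  · rw [hb0.deriv.deriv_eq, deriv_deriv_exp_neg_comp_rightInverse_exp_mul_id hΥ2 hg2 hg0 hfg]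
end

section
/- Let ω, Υ, Q be C³ (respectively C¹ for Q) real-valued functions on a neighborhood of 0 in ℝ satisfying the radial eikonal equation 2r·Υ'(r) + r²·(Υ'(r)² + Q(r)) = e^{2(ω(r) − Υ(r))} − 1 for all r near 0. Write ω₀ = ω(0), ω₁ = ω'(0), ω₂ = ω''(0), q = Q(0). Let b be defined near 0 by inverting r̂ = e^{Υ(r)}·r as r = r̂·b(r̂) (with b(0) := e^{−Υ(0)}). Then b is C² near 0 with b(0) = e^{−ω₀}, b'(0) = −(1/2)·ω₁·e^{−2ω₀}, and b''(0) = ((2/3)·ω₁² + (1/3)·q − (1/3)·ω₂)·e^{−3ω₀}. Equivalently, b(r̂) = e^{−ω}[1 − (1/2)ω_r e^{−ω} r̂ + ((1/3)ω_r² + (1/6)|∇ω|² − (1/6)ω_{rr})e^{−2ω} r̂²] + O(r̂³). -/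
/-!
Evaluating the eikonal equation and its first two derivatives at `r = 0` gives `Υ(0) = ω₀`,
`Υ'(0) = ω₁ / 2` and `Υ''(0) = ω₂ / 3 + ω₁² / 12 - q / 3`. Since `g s = s e^{-Υ (g s)}`, near 0
the function `b` is `e^{-Υ ∘ g}`, which is C² because `g` is, by the inverse function theorem.
Differentiating with `g' = (f' ∘ g)⁻¹` gives `b(0) = e^{-Υ(0)}`, `b'(0) = -Υ'(0) e^{-2Υ(0)}` and
`b''(0) = (3 Υ'(0)² - Υ''(0)) e^{-3Υ(0)}`; substituting the values of `Υ` at 0 concludes.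
-/

open Filter Topology Real

theorem hasDerivAt_mul_of_continuousAt_zero {𝕜 : Type*} [NontriviallyNormedField 𝕜]
    {H : 𝕜 → 𝕜} (hH : ContinuousAt H 0) : HasDerivAt (fun r => r * H r) (H 0) 0 := by
  rw [hasDerivAt_iff_tendsto_slope]
  refine (hH.tendsto.mono_left nhdsWithin_le_nhds).congr' ?_
  filter_upwards [self_mem_nhdsWithin] with r (hr : r ≠ 0)
  simp [slope_def_field, hr]

theorem ContDiffAt.of_local_left_inverse {𝕂 : Type*} [RCLike 𝕂] {f g : 𝕂 → 𝕂} {f' a : 𝕂}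
    {n : WithTop ℕ∞} (hf : ContDiffAt 𝕂 n f a) (hf' : HasDerivAt f f' a) (h0 : f' ≠ 0)
    (hn : n ≠ 0) (hg : ∀ᶠ x in 𝓝 a, g (f x) = x) : ContDiffAt 𝕂 n g (f a) := by
  have he := hf'.hasFDerivAt_equiv h0
  exact (hf.to_localInverse he hn).congr_of_eventuallyEq
    ((hf.hasStrictFDerivAt' he hn).localInverse_unique hg)

theorem hasDerivAt_exp_mul_self {Υ : ℝ → ℝ} {υ r : ℝ} (h : HasDerivAt Υ υ r) :
    HasDerivAt (fun r => exp (Υ r) * r) (exp (Υ r) * (1 + r * υ)) r :=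
  (h.exp.fun_mul (hasDerivAt_id' r)).congr_deriv (by ring)

section InverseOfExpMul

variable {Υ g : ℝ → ℝ}

theorem map_zero_of_eventually_inverse (hgf : ∀ᶠ r in 𝓝 0, g (exp (Υ r) * r) = r) : g 0 = 0 := by
  simpa using hgf.self_of_nhds

theorem contDiffAt_inverse_exp_mul_self {n : WithTop ℕ∞} (hΥ : ContDiffAt ℝ n Υ 0) (hn : n ≠ 0)
    (hgf : ∀ᶠ r in 𝓝 0, g (exp (Υ r) * r) = r) : ContDiffAt ℝ n g 0 := by
  have hf : ContDiffAt ℝ n (fun r => exp (Υ r) * r) 0 := hΥ.exp.mul contDiffAt_id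
  have hf' := hasDerivAt_exp_mul_self (hΥ.differentiableAt hn).hasDerivAt
  simpa using hf.of_local_left_inverse hf' (by simp [exp_ne_zero]) hn hgf

theorem tendsto_inverse_exp_mul_self (hΥ : ContDiffAt ℝ 1 Υ 0)
    (hgf : ∀ᶠ r in 𝓝 0, g (exp (Υ r) * r) = r) : Tendsto g (𝓝 0) (𝓝 0) := by
  simpa [map_zero_of_eventually_inverse hgf] using
    (contDiffAt_inverse_exp_mul_self hΥ one_ne_zero hgf).continuousAt.tendsto

theorem eventually_differentiableAt_comp_inverse (hΥ : ContDiffAt ℝ 1 Υ 0)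
    (hgf : ∀ᶠ r in 𝓝 0, g (exp (Υ r) * r) = r) : ∀ᶠ s in 𝓝 0, DifferentiableAt ℝ Υ (g s) :=
  (tendsto_inverse_exp_mul_self hΥ hgf).eventually
    ((hΥ.eventually (by simp)).mono fun _ h => h.differentiableAt one_ne_zero)

theorem eventually_hasDerivAt_inverse_exp_mul_self (hΥ : ContDiffAt ℝ 1 Υ 0)
    (hgf : ∀ᶠ r in 𝓝 0, g (exp (Υ r) * r) = r) (hfg : ∀ᶠ s in 𝓝 0, exp (Υ (g s)) * g s = s) :
    ∀ᶠ s in 𝓝 0, HasDerivAt g (exp (Υ (g s)) * (1 + g s * deriv Υ (g s)))⁻¹ s := by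
  filter_upwards [eventually_differentiableAt_comp_inverse hΥ hgf,
    (contDiffAt_inverse_exp_mul_self hΥ one_ne_zero hgf).eventually (by simp),
    hfg.eventually_nhds] with s hΥs hgs hfgs
  have hgs := (hgs.differentiableAt one_ne_zero).hasDerivAt
  have hcomp := (hasDerivAt_exp_mul_self hΥs.hasDerivAt).comp s hgs
  have hid : HasDerivAt (fun s => exp (Υ (g s)) * g s) 1 s :=
    (hasDerivAt_id s).congr_of_eventuallyEq hfgs
  rwa [← eq_inv_of_mul_eq_one_right (hcomp.unique hid)]

/-- If `g` inverts `r ↦ e^{Υ r} r`, then `(fun s ↦ e^{-Υ (g s)})' = expNegSlope Υ ∘ g`. -/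
noncomputable def expNegSlope (Υ : ℝ → ℝ) (r : ℝ) : ℝ :=
  -(deriv Υ r * exp (-2 * Υ r)) / (1 + r * deriv Υ r)

theorem eventually_hasDerivAt_exp_neg_comp (hΥ : ContDiffAt ℝ 1 Υ 0)
    (hgf : ∀ᶠ r in 𝓝 0, g (exp (Υ r) * r) = r) (hfg : ∀ᶠ s in 𝓝 0, exp (Υ (g s)) * g s = s) :
    ∀ᶠ s in 𝓝 0, HasDerivAt (fun s => exp (-Υ (g s))) (expNegSlope Υ (g s)) s := by
  filter_upwards [eventually_differentiableAt_comp_inverse hΥ hgf,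
    eventually_hasDerivAt_inverse_exp_mul_self hΥ hgf hfg] with s hΥs hgs
  refine (hΥs.hasDerivAt.fun_neg.exp.comp s hgs).congr_deriv ?_
  rw [expNegSlope, show -2 * Υ (g s) = -Υ (g s) - Υ (g s) by ring, exp_sub, mul_inv]
  ring

theorem hasDerivAt_expNegSlope_zero (hΥ : DifferentiableAt ℝ Υ 0)
    (hΥ' : DifferentiableAt ℝ (deriv Υ) 0) :
    HasDerivAt (expNegSlope Υ)
      ((3 * deriv Υ 0 ^ 2 - deriv (deriv Υ) 0) * exp (-2 * Υ 0)) 0 := by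
  have hnum := hΥ'.hasDerivAt.fun_mul (hΥ.hasDerivAt.const_mul (-2)).exp
  have hden := ((hasDerivAt_id' (0 : ℝ)).fun_mul hΥ'.hasDerivAt).const_add 1
  refine (hnum.fun_neg.fun_div hden (by simp)).congr_deriv ?_
  ring

theorem deriv_exp_neg_comp_zero (hΥ : ContDiffAt ℝ 1 Υ 0)
    (hgf : ∀ᶠ r in 𝓝 0, g (exp (Υ r) * r) = r) (hfg : ∀ᶠ s in 𝓝 0, exp (Υ (g s)) * g s = s) :
    deriv (fun s => exp (-Υ (g s))) 0 = -deriv Υ 0 * exp (-2 * Υ 0) := by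
  rw [(eventually_hasDerivAt_exp_neg_comp hΥ hgf hfg).self_of_nhds.deriv,
    map_zero_of_eventually_inverse hgf, expNegSlope]
  simp

theorem deriv_deriv_exp_neg_comp_zero (hΥ : ContDiffAt ℝ 2 Υ 0)
    (hgf : ∀ᶠ r in 𝓝 0, g (exp (Υ r) * r) = r) (hfg : ∀ᶠ s in 𝓝 0, exp (Υ (g s)) * g s = s) :
    deriv (deriv fun s => exp (-Υ (g s))) 0
      = (3 * deriv Υ 0 ^ 2 - deriv (deriv Υ) 0) * exp (-3 * Υ 0) := by
  have hΥ1 : ContDiffAt ℝ 1 Υ 0 := hΥ.of_le (by norm_num)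
  have hg0 := map_zero_of_eventually_inverse hgf
  have hderiv : deriv (fun s => exp (-Υ (g s))) =ᶠ[𝓝 0] expNegSlope Υ ∘ g :=
    (eventually_hasDerivAt_exp_neg_comp hΥ1 hgf hfg).mono fun _ h => h.deriv
  have hslope := hasDerivAt_expNegSlope_zero (hΥ.differentiableAt (by simp))
    ((hΥ.derivWithin (m := 1) (by norm_num)).differentiableAt (by simp))
  have hg' := (eventually_hasDerivAt_inverse_exp_mul_self hΥ1 hgf hfg).self_of_nhds
  rw [hg0] at hg'
  rw [← hg0] at hslope
  rw [hderiv.deriv_eq, (hslope.comp 0 hg').deriv, hg0,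
    show -3 * Υ 0 = -2 * Υ 0 - Υ 0 by ring, exp_sub]
  simp [div_eq_mul_inv, mul_assoc]

theorem eventually_contDiffAt_exp_neg_comp {n : ℕ} (hΥ : ContDiffAt ℝ n Υ 0) (hn : n ≠ 0)
    (hgf : ∀ᶠ r in 𝓝 0, g (exp (Υ r) * r) = r) :
    ∀ᶠ s in 𝓝 0, ContDiffAt ℝ n (fun s => exp (-Υ (g s))) s := by
  have hg := contDiffAt_inverse_exp_mul_self hΥ (by exact_mod_cast hn) hgf
  rw [← map_zero_of_eventually_inverse hgf] at hΥ
  exact (hΥ.comp 0 hg).neg.exp.eventually (by simp)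

theorem ite_div_eventuallyEq_exp_neg_comp (hg0 : g 0 = 0)
    (hfg : ∀ᶠ s in 𝓝 0, exp (Υ (g s)) * g s = s) :
    (fun s => if s = 0 then exp (-Υ 0) else g s / s) =ᶠ[𝓝 0] fun s => exp (-Υ (g s)) := by
  filter_upwards [hfg] with s hs
  split_ifs with h
  · simp [h, hg0]
  · rw [div_eq_iff h, exp_neg, eq_comm, inv_mul_eq_iff_eq_mul₀ (exp_ne_zero _), hs]

end InverseOfExpMul

section Eikonal

noncomputable def eikonalLhs (u Q : ℝ → ℝ) (r : ℝ) : ℝ := 2 * r * u r + r ^ 2 * (u r ^ 2 + Q r)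

theorem hasDerivAt_eikonalLhs {u Q : ℝ → ℝ} {u' q' r : ℝ} (hu : HasDerivAt u u' r)
    (hQ : HasDerivAt Q q' r) :
    HasDerivAt (eikonalLhs u Q)
      (2 * u r + r * (2 * u' + 2 * (u r ^ 2 + Q r) + r * (2 * u r * u' + q'))) r := by
  have h := (((hasDerivAt_id' r).const_mul 2).fun_mul hu).fun_add
    ((hasDerivAt_pow 2 r).fun_mul ((hu.fun_pow 2).fun_add hQ))
  refine h.congr_deriv ?_
  ring

variable {ω Υ Q : ℝ → ℝ}

theorem deriv_deriv_eikonalLhs_zero (hΥ : ContDiffAt ℝ 2 Υ 0) (hQ : ContDiffAt ℝ 1 Q 0) :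
    deriv (deriv (eikonalLhs (deriv Υ) Q)) 0
      = 4 * deriv (deriv Υ) 0 + 2 * (deriv Υ 0 ^ 2 + Q 0) := by
  have hΥ1 := hΥ.derivWithin (m := 1) (by norm_num)
  have hΥ2 := (hΥ1.derivWithin (m := 0) (by norm_num)).continuousAt
  have hQ1 := (hQ.derivWithin (m := 0) (by norm_num)).continuousAt
  have hLd : deriv (eikonalLhs (deriv Υ) Q)
      =ᶠ[𝓝 0] fun r => 2 * deriv Υ r + r * (2 * deriv (deriv Υ) r + 2 * (deriv Υ r ^ 2 + Q r)
        + r * (2 * deriv Υ r * deriv (deriv Υ) r + deriv Q r)) := by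
    filter_upwards [hΥ1.eventually (by simp), hQ.eventually (by simp)] with r hΥr hQr
    exact (hasDerivAt_eikonalLhs (hΥr.differentiableAt (by simp)).hasDerivAt
      (hQr.differentiableAt (by simp)).hasDerivAt).deriv
  rw [hLd.deriv_eq]
  refine (((hΥ1.differentiableAt (by simp)).hasDerivAt.const_mul 2).fun_add
    ((hasDerivAt_mul_of_continuousAt_zero ?_))).deriv.trans ?_
  · have := hΥ1.continuousAt
    have := hQ.continuousAt
    fun_prop
  · ring

theorem deriv_deriv_exp_two_mul_sub_zero (hω : ContDiffAt ℝ 2 ω 0) (hΥ : ContDiffAt ℝ 2 Υ 0) :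
    deriv (deriv fun r => exp (2 * (ω r - Υ r)) - 1) 0 = exp (2 * (ω 0 - Υ 0)) *
      (4 * (deriv ω 0 - deriv Υ 0) ^ 2 + 2 * (deriv (deriv ω) 0 - deriv (deriv Υ) 0)) := by
  have hω1 := hω.derivWithin (m := 1) (by norm_num)
  have hΥ1 := hΥ.derivWithin (m := 1) (by norm_num)
  have hRd : deriv (fun r => exp (2 * (ω r - Υ r)) - 1)
      =ᶠ[𝓝 0] fun r => exp (2 * (ω r - Υ r)) * (2 * (deriv ω r - deriv Υ r)) := by
    filter_upwards [hΥ.eventually (by simp), hω.eventually (by simp)] with r hΥr hωr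
    exact ((((hωr.differentiableAt (by simp)).hasDerivAt.fun_sub
      (hΥr.differentiableAt (by simp)).hasDerivAt).const_mul 2).exp.sub_const 1).deriv
  rw [hRd.deriv_eq]
  refine ((((hω.differentiableAt (by simp)).hasDerivAt.fun_sub
      (hΥ.differentiableAt (by simp)).hasDerivAt).const_mul 2).exp.fun_mul
    (((hω1.differentiableAt (by simp)).hasDerivAt.fun_sub
      (hΥ1.differentiableAt (by simp)).hasDerivAt).const_mul 2)).deriv.trans ?_
  ring

theorem eikonal_zero (heq : eikonalLhs (deriv Υ) Q =ᶠ[𝓝 0] fun r => exp (2 * (ω r - Υ r)) - 1) :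
    Υ 0 = ω 0 := by
  have h := heq.eq_of_nhds
  simp only [eikonalLhs, mul_zero, zero_mul, ne_eq, OfNat.ofNat_ne_zero, not_false_eq_true,
    zero_pow, add_zero] at h
  have : 2 * (ω 0 - Υ 0) = 0 := exp_eq_one_iff _ |>.1 (by linarith)
  linarith

theorem eikonal_deriv_zero (hΥ : ContDiffAt ℝ 2 Υ 0) (hω : DifferentiableAt ℝ ω 0)
    (hQ : DifferentiableAt ℝ Q 0)
    (heq : eikonalLhs (deriv Υ) Q =ᶠ[𝓝 0] fun r => exp (2 * (ω r - Υ r)) - 1) :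
    deriv Υ 0 = deriv ω 0 / 2 := by
  have hΥ' := (hΥ.derivWithin (m := 1) (by norm_num)).differentiableAt (by simp)
  have hL := hasDerivAt_eikonalLhs hΥ'.hasDerivAt hQ.hasDerivAt
  have hR := (((hω.hasDerivAt.fun_sub (hΥ.differentiableAt (by simp)).hasDerivAt).const_mul
    2).exp.sub_const 1)
  have h := heq.deriv_eq
  rw [hL.deriv, hR.deriv, eikonal_zero heq, sub_self, mul_zero, exp_zero, one_mul] at h
  linarith

theorem eikonal_deriv_deriv_zero (hΥ : ContDiffAt ℝ 2 Υ 0) (hω : ContDiffAt ℝ 2 ω 0)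
    (hQ : ContDiffAt ℝ 1 Q 0)
    (heq : eikonalLhs (deriv Υ) Q =ᶠ[𝓝 0] fun r => exp (2 * (ω r - Υ r)) - 1) :
    deriv (deriv Υ) 0 = deriv (deriv ω) 0 / 3 + deriv ω 0 ^ 2 / 12 - Q 0 / 3 := by
  have h := heq.deriv.deriv_eq
  rw [deriv_deriv_eikonalLhs_zero hΥ hQ, deriv_deriv_exp_two_mul_sub_zero hω hΥ, eikonal_zero heq,
    eikonal_deriv_zero hΥ (hω.differentiableAt (by simp)) (hQ.differentiableAt (by simp)) heq,
    sub_self, mul_zero, exp_zero, one_mul] at h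
  linarith

end Eikonal

theorem stmt8_general (ω Υ Q : ℝ → ℝ) (U : Set ℝ) (hUo : IsOpen U) (hU0 : (0 : ℝ) ∈ U)
    (hω : ContDiffOn ℝ 3 ω U) (hΥ : ContDiffOn ℝ 3 Υ U) (hQ : ContDiffOn ℝ 1 Q U)
    (heq : ∀ r ∈ U, 2 * r * deriv Υ r + r ^ 2 * ((deriv Υ r) ^ 2 + Q r)
      = Real.exp (2 * (ω r - Υ r)) - 1)
    (f : ℝ → ℝ) (hf : f = fun r => Real.exp (Υ r) * r)
    (g : ℝ → ℝ) (V : Set ℝ) (hVo : IsOpen V) (hV0 : (0 : ℝ) ∈ V)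
    (hfg : ∀ s ∈ V, f (g s) = s) (hgf : ∀ r ∈ V, g (f r) = r)
    (b : ℝ → ℝ) (hb : b = fun s => if s = 0 then Real.exp (-Υ 0) else g s / s) :
    ∃ V' : Set ℝ, IsOpen V' ∧ (0 : ℝ) ∈ V' ∧ ContDiffOn ℝ 2 b V' ∧
      b 0 = Real.exp (-ω 0) ∧
      deriv b 0 = -(1 / 2) * deriv ω 0 * Real.exp (-2 * ω 0) ∧
      deriv (deriv b) 0
        = ((2 / 3) * (deriv ω 0) ^ 2 + (1 / 3) * Q 0 - (1 / 3) * deriv (deriv ω) 0)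
          * Real.exp (-3 * ω 0) := by
  subst hf hb
  have hU : U ∈ 𝓝 0 := hUo.mem_nhds hU0
  have hΥ2 : ContDiffAt ℝ 2 Υ 0 := (hΥ.contDiffAt hU).of_le (by norm_num)
  have hω2 : ContDiffAt ℝ 2 ω 0 := (hω.contDiffAt hU).of_le (by norm_num)
  have heq' : eikonalLhs (deriv Υ) Q =ᶠ[𝓝 0] fun r => exp (2 * (ω r - Υ r)) - 1 :=
    eventually_of_mem hU heq
  have hgf' := eventually_of_mem (hVo.mem_nhds hV0) hgf
  have hfg' := eventually_of_mem (hVo.mem_nhds hV0) hfg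
  have hΥ0 := eikonal_zero heq'
  have hΥ1 := eikonal_deriv_zero hΥ2 (hω2.differentiableAt (by simp))
    ((hQ.contDiffAt hU).differentiableAt (by simp)) heq'
  have hbB := ite_div_eventuallyEq_exp_neg_comp (map_zero_of_eventually_inverse hgf') hfg'
  obtain ⟨V', hV'b, hV'o, hV'0⟩ := eventually_nhds_iff.1
    (hbB.eventually_nhds.and (eventually_contDiffAt_exp_neg_comp hΥ2 two_ne_zero hgf'))
  refine ⟨V', hV'o, hV'0, fun s hs => ((hV'b s hs).2.congr_of_eventuallyEq
    (hV'b s hs).1).contDiffWithinAt, by simp [hΥ0], ?_, ?_⟩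
  · rw [hbB.deriv_eq, deriv_exp_neg_comp_zero (hΥ2.of_le one_le_two) hgf' hfg', hΥ0, hΥ1]
    ring
  · rw [hbB.deriv.deriv_eq, deriv_deriv_exp_neg_comp_zero hΥ2 hgf' hfg',
      eikonal_deriv_deriv_zero hΥ2 hω2 (hQ.contDiffAt hU) heq', hΥ0, hΥ1]
    ring

/-- if `ω, Υ, Q` satisfy the radial eikonal equation
`2rΥ' + r²(Υ'² + Q) = e^{2(ω − Υ)} − 1` near 0 and `b` is obtained by inverting
`r̂ = e^{Υ(r)} r` as `r = r̂·b(r̂)`, then `b` is C² near 0 with `b(0) = e^{−ω₀}`,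
`b'(0) = −½ω₁e^{−2ω₀}` and `b''(0) = (⅔ω₁² + ⅓q − ⅓ω₂)e^{−3ω₀}`, where
`ω₀ = ω(0)`, `ω₁ = ω'(0)`, `ω₂ = ω''(0)`, `q = Q(0)`. -/
theorem stmt8 (ω Υ Q : ℝ → ℝ) (U : Set ℝ) (hUo : IsOpen U) (hU0 : (0 : ℝ) ∈ U)
    (hω : ContDiffOn ℝ 3 ω U) (hΥ : ContDiffOn ℝ 3 Υ U) (hQ : ContDiffOn ℝ 1 Q U)
    (heq : ∀ r ∈ U, 2 * r * deriv Υ r + r ^ 2 * ((deriv Υ r) ^ 2 + Q r)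
      = Real.exp (2 * (ω r - Υ r)) - 1)
    (f : ℝ → ℝ) (hf : f = fun r => Real.exp (Υ r) * r)
    (g : ℝ → ℝ) (V : Set ℝ) (hVo : IsOpen V) (hV0 : (0 : ℝ) ∈ V)
    (hfg : ∀ s ∈ V, f (g s) = s) (hgf : ∀ r ∈ V, g (f r) = r) (hg0 : g 0 = 0)
    (b : ℝ → ℝ) (hb : b = fun s => if s = 0 then Real.exp (-Υ 0) else g s / s) :
    ∃ V' : Set ℝ, IsOpen V' ∧ (0 : ℝ) ∈ V' ∧ ContDiffOn ℝ 2 b V' ∧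
      b 0 = Real.exp (-ω 0) ∧
      deriv b 0 = -(1 / 2) * deriv ω 0 * Real.exp (-2 * ω 0) ∧
      deriv (deriv b) 0
        = ((2 / 3) * (deriv ω 0) ^ 2 + (1 / 3) * Q 0 - (1 / 3) * deriv (deriv ω) 0)
          * Real.exp (-3 * ω 0) :=
  stmt8_general ω Υ Q U hUo hU0 hω hΥ hQ heq f hf g V hVo hV0 hfg hgf b hb
end

section
/- Let ω₀, ω₁, ω₂, q, H, R, σ be real numbers, and set v₁ := −H/4 and v₂ := (σ − R)/4. Let b be a C² real-valued function on a neighborhood of 0 in ℝ with b(0) = e^{−ω₀}, b'(0) = −(1/2)·ω₁·e^{−2ω₀}, and b''(0) = ((2/3)·ω₁² + (1/3)·q − (1/3)·ω₂)·e^{−3ω₀}. Then the limit as ε → 0⁺ of [ −(1/2)·ε^{−2}·b(ε)^{−2} − ε^{−1}·v₁·b(ε)^{−1} + v₂·log b(ε) + (1/2)·e^{2ω₀}·ε^{−2} + ((1/2)·ω₁ + v₁)·e^{ω₀}·ε^{−1} ] exists and equals −(1/8)·[ 2(σ − R)·ω₀ − H·ω₁ + (1/3)·(4ω₂ − 4q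 + ω₁²) ]. This identifies the pointwise integrand of the n = 2 renormalized-volume anomaly: V − V̂ = −(1/8)∫_Σ [2(|L̊|² − R)ω − Hω_r + (1/3)(4ω_{rr} − 4ω_iω^i + (ω_r)²)] dv_h. -/
open Topology Filter

/-!
With `φ x = -½ b(x)⁻² - v₁ x b(x)⁻¹`, the regularized expression equals
`(φ ε - φ 0 - φ'(0) ε) / ε² + v₂ log b(ε)`: the 1-jet of `b` makes the two counterterms exactly
`φ 0` and `φ'(0)`. The second-order Taylor remainder of `φ` divided by `ε²` tends to `φ''(0) / 2`
(L'Hôpital once, then the definition of `φ''(0)`), and `b''(0)` turns this into the anomaly.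
-/

theorem tendsto_taylor_remainder_div_sq {f f' : ℝ → ℝ} {c : ℝ}
    (hf : ∀ᶠ x in 𝓝 0, HasDerivAt f (f' x) x) (hf' : HasDerivAt f' c 0) :
    Tendsto (fun x => (f x - f 0 - f' 0 * x) / x ^ 2) (𝓝[≠] 0) (𝓝 (c / 2)) := by
  have hslope : Tendsto (fun x => (f' x - f' 0) / (2 * x)) (𝓝[≠] 0) (𝓝 (c / 2)) := by
    refine (hf'.tendsto_slope_zero.div_const 2).congr fun x => ?_
    simp only [zero_add, smul_eq_mul]
    ring
  have hcont : ContinuousAt f 0 := hf.self_of_nhds.continuousAt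
  refine HasDerivAt.lhopital_zero_nhdsNE (f' := fun x => f' x - f' 0)
    (nhdsWithin_le_nhds <| hf.mono fun x hx => by
      simpa using (hx.sub_const (f 0)).fun_sub ((hasDerivAt_id x).const_mul (f' 0)))
    (.of_forall fun x => by simpa using hasDerivAt_pow 2 x) ?_ ?_ ?_ hslope
  · filter_upwards [self_mem_nhdsWithin] with x hx using mul_ne_zero two_ne_zero hx
  · have : ContinuousAt (fun x => f x - f 0 - f' 0 * x) 0 := by fun_prop
    simpa using this.tendsto.mono_left nhdsWithin_le_nhds
  · simpa using ((continuous_pow 2).tendsto (0 : ℝ)).mono_left nhdsWithin_le_nhds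

theorem hasDerivAt_neg_half_inv_sq_sub_mul_inv {b : ℝ → ℝ} {b' x : ℝ} (v : ℝ)
    (hb : HasDerivAt b b' x) (hbx : b x ≠ 0) :
    HasDerivAt (fun y => -(1 / 2) * (b y ^ 2)⁻¹ - v * y * (b y)⁻¹)
      (b' / b x ^ 3 - v / b x + v * x * b' / b x ^ 2) x := by
  refine (((hb.fun_pow 2).fun_inv (pow_ne_zero 2 hbx)).const_mul (-(1 / 2))).fun_sub
    (((hasDerivAt_id' x).const_mul v).fun_mul (hb.fun_inv hbx)) |>.congr_deriv ?_
  field_simp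
  ring

theorem hasDerivAt_neg_half_inv_sq_sub_mul_inv_deriv {b b' : ℝ → ℝ} {b'' x : ℝ} (v : ℝ)
    (hb : HasDerivAt b (b' x) x) (hb' : HasDerivAt b' b'' x) (hbx : b x ≠ 0) :
    HasDerivAt (fun y => b' y / b y ^ 3 - v / b y + v * y * b' y / b y ^ 2)
      (b'' / b x ^ 3 - 3 * b' x ^ 2 / b x ^ 4 + 2 * v * b' x / b x ^ 2
        + v * x * (b'' / b x ^ 2 - 2 * b' x ^ 2 / b x ^ 3)) x := by
  refine ((hb'.fun_div (hb.fun_pow 3) (pow_ne_zero 3 hbx)).fun_sub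
    ((hasDerivAt_const x v).fun_div hb hbx)).fun_add
    ((((hasDerivAt_id' x).const_mul v).fun_mul hb').fun_div (hb.fun_pow 2) (pow_ne_zero 2 hbx))
    |>.congr_deriv ?_
  field_simp
  ring

/-- the pointwise integrand of the `n = 2` renormalized-volume anomaly:
with `v₁ = −H/4`, `v₂ = (σ − R)/4` and `b` having the stated 2-jet, the regularized
combination tends to `−⅛[2(σ − R)ω₀ − Hω₁ + ⅓(4ω₂ − 4q + ω₁²)]` as `ε → 0⁺`. -/
theorem stmt10 (ω₀ ω₁ ω₂ q H R σ : ℝ) (v₁ v₂ : ℝ)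
    (hv₁ : v₁ = -H / 4) (hv₂ : v₂ = (σ - R) / 4)
    (b : ℝ → ℝ) (U : Set ℝ) (hUo : IsOpen U) (hU0 : (0 : ℝ) ∈ U)
    (hb : ContDiffOn ℝ 2 b U)
    (hb0 : b 0 = Real.exp (-ω₀))
    (hb1 : deriv b 0 = -(1 / 2) * ω₁ * Real.exp (-2 * ω₀))
    (hb2 : deriv (deriv b) 0
      = ((2 / 3) * ω₁ ^ 2 + (1 / 3) * q - (1 / 3) * ω₂) * Real.exp (-3 * ω₀)) :
    Filter.Tendsto (fun ε : ℝ =>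
        -(1 / 2) * (ε ^ 2)⁻¹ * ((b ε) ^ 2)⁻¹ - ε⁻¹ * v₁ * (b ε)⁻¹ + v₂ * Real.log (b ε)
          + (1 / 2) * Real.exp (2 * ω₀) * (ε ^ 2)⁻¹
          + ((1 / 2) * ω₁ + v₁) * Real.exp ω₀ * ε⁻¹)
      (𝓝[>] 0)
      (𝓝 (-(1 / 8) * (2 * (σ - R) * ω₀ - H * ω₁
          + (1 / 3) * (4 * ω₂ - 4 * q + ω₁ ^ 2)))) := by
  set E := Real.exp ω₀
  have hE : E ≠ 0 := (Real.exp_pos ω₀).ne'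
  have hexp_neg : Real.exp (-ω₀) = E⁻¹ := Real.exp_neg ω₀
  have hexp_two : Real.exp (2 * ω₀) = E ^ 2 := by rw [← Real.exp_nat_mul]; norm_num
  have hexp_neg_two : Real.exp (-2 * ω₀) = E⁻¹ ^ 2 := by
    rw [← hexp_neg, ← Real.exp_nat_mul]; norm_num
  have hexp_neg_three : Real.exp (-3 * ω₀) = E⁻¹ ^ 3 := by
    rw [← hexp_neg, ← Real.exp_nat_mul]; norm_num
  rw [hexp_neg] at hb0
  rw [hexp_neg_two] at hb1
  rw [hexp_neg_three] at hb2
  have hdiff : ∀ᶠ x in 𝓝 0, HasDerivAt b (deriv b x) x :=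
    (hb.contDiffAt (hUo.mem_nhds hU0)).eventually (by simp) |>.mono fun x hx =>
      (hx.differentiableAt (by norm_num)).hasDerivAt
  have hdiff2 : HasDerivAt (deriv b) (deriv (deriv b) 0) 0 :=
    (((hb.deriv_of_isOpen hUo (by norm_num) : ContDiffOn ℝ 1 (deriv b) U).differentiableOn
      one_ne_zero).differentiableAt (hUo.mem_nhds hU0)).hasDerivAt
  have hne : ∀ᶠ x in 𝓝 0, b x ≠ 0 :=
    hdiff.self_of_nhds.continuousAt.eventually_ne (by rw [hb0]; positivity)
  have hrem := tendsto_taylor_remainder_div_sq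
    ((hne.and hdiff).mono fun x hx => hasDerivAt_neg_half_inv_sq_sub_mul_inv v₁ hx.2 hx.1)
    (hasDerivAt_neg_half_inv_sq_sub_mul_inv_deriv v₁ hdiff.self_of_nhds hdiff2 hne.self_of_nhds)
  have hlog : Tendsto (fun ε => v₂ * Real.log (b ε)) (𝓝 0) (𝓝 (v₂ * Real.log (b 0))) :=
    (continuousAt_const.mul (hdiff.self_of_nhds.continuousAt.log hne.self_of_nhds)).tendsto
  convert ((hrem.mono_left (nhdsGT_le_nhdsNE 0)).add
    (hlog.mono_left nhdsWithin_le_nhds)).congr' ?_ using 2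
  · rw [hb0, hb1, hb2, Real.log_inv, Real.log_exp, hv₁, hv₂]
    field_simp
    ring
  · filter_upwards [self_mem_nhdsWithin] with ε (hε : 0 < ε)
    rw [hb0, hb1, hexp_two]
    field_simp
    ring
end

section
/- Let n ≥ 1 be an integer and let a, ρ be smooth real-valued functions on a neighborhood of 0 in ℝ. Then there exist unique real numbers u₂, …, u_{n+1}, ℓ such that the function u(r) := r + u₂r² + ⋯ + u_{n+1}r^{n+1} + ℓ·r^{n+2}·log r satisfies n(n+1)·u'(r)² − 2n·u(r)·(u''(r) + a(r)·u'(r)) − u(r)²·ρ(r) − n(n+1) = O(r^{n+2}·log r) as r → 0⁺. -/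
/-!
Write `u = r + w`. The error is a quadratic expression in `(u, u', u'')` whose linearization
at `u = r` is `L w = 2n((n+1) w' - r w'')`; a perturbation `w` with
`(w, w', w'') = O(r²ψ, rψ, ψ)`, `ψ` bounded, changes the error by `L w + O(r²ψ)`. Since
`L r^{k+2} = 2n(k+2)(n-k) r^{k+1}` is nonzero for `k < n`, the coefficients `u₂, …, u_{n+1}`
are forced one at a time: the error of the log-free function is smooth, and the coefficient
`u_{k+2}` is the one cancelling the `r^{k+1}` term of its Taylor expansion. But
`L r^{n+2} = 0`, so the `r^{n+1}` term can only be cancelled by the log term, as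
`L (r^{n+2} log r) = -2n(n+2) r^{n+1}`, which forces `ℓ`.
-/

open Topology Filter Asymptotics

/-- The candidate approximate singular Yamabe defining function
`u(r) = r + u₂r² + ⋯ + u_{n+1}r^{n+1} + ℓ r^{n+2} log r`, with `v k = u_{k+2}`. -/
noncomputable def syDefiningFn (n : ℕ) (v : Fin n → ℝ) (ℓ : ℝ) : ℝ → ℝ :=
  fun r => r + ∑ k : Fin n, v k * r ^ ((k : ℕ) + 2) + ℓ * r ^ (n + 2) * Real.log r

namespace SingularYamabe

open Real Finset Polynomial

lemma pow_isBigO_pow_of_le {i j : ℕ} (h : j ≤ i) :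
    (fun r : ℝ => r ^ i) =O[𝓝[>] 0] fun r => r ^ j := by
  rcases h.lt_or_eq with h | rfl
  · exact (isLittleO_pow_pow h).isBigO.mono nhdsWithin_le_nhds
  · exact isBigO_refl _ _

lemma id_isBigO_one : (fun r : ℝ => r) =O[𝓝[>] 0] fun _ => (1 : ℝ) :=
  (tendsto_id.mono_left nhdsWithin_le_nhds).isBigO_one ℝ

lemma pow_succ_mul_log_isLittleO_pow (j : ℕ) :
    (fun r : ℝ => r ^ (j + 1) * log r) =o[𝓝[>] 0] fun r => r ^ j := by
  have hlog : Tendsto (fun r : ℝ => r * log r) (𝓝[>] 0) (𝓝 0) := by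
    simpa using continuous_mul_log.continuousAt.tendsto.mono_left (nhdsWithin_le_nhds (a := (0:ℝ)))
  have := (isBigO_refl (fun r : ℝ => r ^ j) (𝓝[>] 0)).mul_isLittleO
    ((isLittleO_one_iff ℝ).2 hlog)
  simpa [pow_succ, mul_assoc] using this

lemma pow_mul_log_isBigO_pow {i j : ℕ} (h : j < i) :
    (fun r : ℝ => r ^ i * log r) =O[𝓝[>] 0] fun r => r ^ j := by
  obtain ⟨k, rfl⟩ := Nat.exists_eq_add_of_lt h
  exact (pow_succ_mul_log_isLittleO_pow (j + k)).isBigO.trans (pow_isBigO_pow_of_le (by omega))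

lemma pow_isBigO_pow_mul_log (j : ℕ) :
    (fun r : ℝ => r ^ j) =O[𝓝[>] 0] fun r => r ^ j * log r := by
  refine IsBigO.of_bound 1 ?_
  filter_upwards [tendsto_log_nhdsGT_zero.eventually (eventually_le_atBot (-1))] with r hr
  rw [norm_mul, one_mul, Real.norm_eq_abs (log r), abs_of_nonpos (by linarith)]
  exact le_mul_of_one_le_right (norm_nonneg _) (by linarith)

lemma eq_zero_of_const_mul_pow_isBigO {c : ℝ} {j : ℕ} {ψ : ℝ → ℝ}
    (h : (fun r : ℝ => c * r ^ j) =O[𝓝[>] 0] ψ) (hψ : ψ =o[𝓝[>] 0] fun r => r ^ j) :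
    c = 0 := by
  by_contra hc
  refine isLittleO_irrefl (l := 𝓝[>] (0:ℝ)) (f'' := fun r : ℝ => r ^ j) ?_
    ((isLittleO_const_mul_left_iff hc).1 (h.trans_isLittleO hψ))
  have hpos : ∀ᶠ r : ℝ in 𝓝[>] 0, r ^ j ≠ 0 := by
    filter_upwards [self_mem_nhdsWithin] with r hr using pow_ne_zero j (ne_of_gt hr)
  exact hpos.frequently

lemma sum_mul_pow_isBigO {n : ℕ} {c : Fin n → ℝ} {m : ℕ} (hc : ∀ k : Fin n, (k : ℕ) < m → c k = 0)
    (e : ℕ) : (fun r : ℝ => ∑ k : Fin n, c k * r ^ ((k : ℕ) + e)) =O[𝓝[>] 0]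
      fun r => r ^ (m + e) := by
  refine IsBigO.fun_sum fun k _ => ?_
  rcases lt_or_ge (k : ℕ) m with hk | hk
  · simpa [hc k hk] using isBigO_zero _ _
  · exact (pow_isBigO_pow_of_le (by omega)).const_mul_left (c k)

lemma sum_mul_pow_sub_isBigO {n : ℕ} {c : Fin n → ℝ} {m : ℕ} (hm : m < n)
    (hc : ∀ k : Fin n, (k : ℕ) < m → c k = 0) (e : ℕ) :
    (fun r : ℝ => ∑ k : Fin n, c k * r ^ ((k : ℕ) + e) - c ⟨m, hm⟩ * r ^ (m + e))
      =O[𝓝[>] 0] fun r => r ^ (m + e + 1) := by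
  set c' : Fin n → ℝ := c - Pi.single ⟨m, hm⟩ (c ⟨m, hm⟩)
  have htail : ∀ k : Fin n, (k : ℕ) < m + 1 → c' k = 0 := by
    intro k hk
    rcases (Nat.lt_succ_iff.1 hk).lt_or_eq with hk | hk
    · simp [c', hc k hk, Fin.ext_iff, hk.ne]
    · obtain rfl : k = ⟨m, hm⟩ := Fin.ext hk
      simp [c']
  refine (sum_mul_pow_isBigO htail e).congr (fun r => ?_) (fun r => by ring_nf)
  simp only [c', Pi.sub_apply, sub_mul, sum_sub_distrib, Pi.single_apply, ite_mul, zero_mul,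
    sum_ite_eq', mem_univ, if_true]

theorem coeff_eq_zero_of_eval_isBigO_pow {p : ℝ[X]} {s : ℕ}
    (h : (fun r => p.eval r) =O[𝓝[>] 0] fun r => r ^ s) : ∀ k < s, p.coeff k = 0 := by
  induction s with
  | zero => intro k hk; omega
  | succ s ih =>
    have hlow := ih (h.trans (pow_isBigO_pow_of_le (Nat.le_succ s)))
    obtain ⟨q, rfl⟩ := X_pow_dvd_iff.2 hlow
    have hq : (fun r => q.eval r) =O[𝓝[>] 0] fun r => r := by
      refine ((isBigO_refl (fun r : ℝ => (r ^ s)⁻¹) _).mul h).congr' ?_ ?_ <;>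
        filter_upwards [self_mem_nhdsWithin] with r (hr : 0 < r)
      · simp [field]
      · simp [field, pow_succ]
    have hq0 : q.eval 0 = 0 :=
      tendsto_nhds_unique (q.continuous.continuousAt.tendsto.mono_left nhdsWithin_le_nhds)
        (hq.trans_tendsto (tendsto_id.mono_left nhdsWithin_le_nhds))
    intro k hk
    rcases (Nat.lt_succ_iff.1 hk).lt_or_eq with hk | rfl
    · exact hlow k hk
    · simpa [coeff_X_pow_mul', coeff_zero_eq_eval_zero] using hq0

theorem exists_sub_const_mul_pow_isBigO {φ : ℝ → ℝ} {b : ℝ} {m : ℕ} (hb : 0 < b)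
    (hφ : ContDiffOn ℝ (m + 2) φ (Set.Icc 0 b))
    (h : φ =O[𝓝[>] 0] fun r => r ^ (m + 1)) :
    ∃ c, (fun r => φ r - c * r ^ (m + 1)) =O[𝓝[>] 0] fun r => r ^ (m + 2) := by
  obtain ⟨C, hC⟩ := exists_taylor_mean_remainder_bound (n := m + 1) hb.le (by exact_mod_cast hφ)
  set c : ℕ → ℝ := fun k => iteratedDerivWithin k φ (Set.Icc 0 b) 0 / k.factorial
  set p : ℝ[X] := ∑ k ∈ range (m + 2), Polynomial.C (c k) * X ^ k
  have htaylor : ∀ x, taylorWithinEval φ (m + 1) (Set.Icc 0 b) 0 x = p.eval x := by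
    intro x
    rw [taylor_within_apply, eval_finsetSum]
    refine sum_congr rfl fun k _ => ?_
    simp only [sub_zero, smul_eq_mul, eval_mul, eval_C, eval_pow, eval_X, c]
    ring
  have hrem : (fun r => φ r - p.eval r) =O[𝓝[>] 0] fun r => r ^ (m + 2) := by
    refine IsBigO.of_bound C ?_
    filter_upwards [Ioo_mem_nhdsGT hb] with r hr
    simpa [← htaylor, abs_of_pos hr.1] using hC r (Set.Ioo_subset_Icc_self hr)
  have hlow : ∀ k < m + 1, c k = 0 := fun k hk => by
    have := coeff_eq_zero_of_eval_isBigO_pow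
      ((h.sub (hrem.trans (pow_isBigO_pow_of_le (Nat.le_succ _)))).congr_left (fun r => by ring))
      k hk
    simpa [p, finsetSum_coeff, coeff_C_mul_X_pow, show k < m + 2 by omega] using this
  refine ⟨c (m + 1), hrem.congr_left fun r => ?_⟩
  rw [eval_finsetSum, sum_range_succ, sum_eq_zero fun k hk => ?_, zero_add]
  · simp
  · simp [hlow k (mem_range.1 hk)]

noncomputable def corr (n : ℕ) (v : Fin n → ℝ) (ℓ r : ℝ) : ℝ :=
  ∑ k : Fin n, v k * r ^ ((k : ℕ) + 2) + ℓ * (r ^ (n + 2) * log r)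

noncomputable def corrDeriv (n : ℕ) (v : Fin n → ℝ) (ℓ r : ℝ) : ℝ :=
  ∑ k : Fin n, (((k : ℕ) : ℝ) + 2) * v k * r ^ ((k : ℕ) + 1)
    + ℓ * ((n + 2) * r ^ (n + 1) * log r + r ^ (n + 1))

-- The exponent `k + 0` gives the sum the shape `∑ c k * r ^ (k + e)` of `sum_mul_pow_isBigO`.
noncomputable def corrDeriv2 (n : ℕ) (v : Fin n → ℝ) (ℓ r : ℝ) : ℝ :=
  ∑ k : Fin n, (((k : ℕ) : ℝ) + 2) * (((k : ℕ) : ℝ) + 1) * v k * r ^ ((k : ℕ) + 0)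
    + ℓ * ((n + 2) * (n + 1) * r ^ n * log r + (2 * n + 3) * r ^ n)

variable {n : ℕ}

lemma syDefiningFn_apply (v : Fin n → ℝ) (ℓ r : ℝ) :
    syDefiningFn n v ℓ r = r + corr n v ℓ r := by
  simp only [syDefiningFn, corr]
  ring

lemma hasDerivAt_corr (v : Fin n → ℝ) (ℓ : ℝ) {r : ℝ} (hr : r ≠ 0) :
    HasDerivAt (corr n v ℓ) (corrDeriv n v ℓ r) r := by
  have hsum := HasDerivAt.fun_sum (u := univ) fun (k : Fin n) _ =>
    (hasDerivAt_pow ((k : ℕ) + 2) r).const_mul (v k)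
  have hlog := ((hasDerivAt_pow (n + 2) r).fun_mul (hasDerivAt_log hr)).const_mul ℓ
  refine (hsum.fun_add hlog).congr_deriv ?_
  simp only [corrDeriv]
  congr 1
  · refine sum_congr rfl fun k _ => ?_
    rw [Nat.add_sub_assoc (by norm_num)]
    push_cast
    ring
  · rw [Nat.add_sub_assoc (by norm_num)]
    field_simp
    push_cast
    ring

lemma hasDerivAt_corrDeriv (v : Fin n → ℝ) (ℓ : ℝ) {r : ℝ} (hr : r ≠ 0) :
    HasDerivAt (corrDeriv n v ℓ) (corrDeriv2 n v ℓ r) r := by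
  have hsum := HasDerivAt.fun_sum (u := univ) fun (k : Fin n) _ =>
    (hasDerivAt_pow ((k : ℕ) + 1) r).const_mul ((((k : ℕ) : ℝ) + 2) * v k)
  have hlog := ((((hasDerivAt_pow (n + 1) r).const_mul ((n : ℝ) + 2)).fun_mul
    (hasDerivAt_log hr)).fun_add (hasDerivAt_pow (n + 1) r)).const_mul ℓ
  refine (hsum.fun_add hlog).congr_deriv ?_
  simp only [corrDeriv2]
  congr 1
  · refine sum_congr rfl fun k _ => ?_
    rw [Nat.add_sub_assoc (by norm_num)]
    push_cast
    ring
  · rw [Nat.add_sub_assoc (by norm_num)]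
    field_simp
    push_cast
    ring

lemma corr_add (v δ : Fin n → ℝ) (ℓ μ r : ℝ) :
    corr n (v + δ) (ℓ + μ) r = corr n v ℓ r + corr n δ μ r := by
  simp only [corr, Pi.add_apply, add_mul, sum_add_distrib]
  ring

lemma corrDeriv_add (v δ : Fin n → ℝ) (ℓ μ r : ℝ) :
    corrDeriv n (v + δ) (ℓ + μ) r = corrDeriv n v ℓ r + corrDeriv n δ μ r := by
  simp only [corrDeriv, Pi.add_apply, mul_add, add_mul, sum_add_distrib]
  ring

lemma corrDeriv2_add (v δ : Fin n → ℝ) (ℓ μ r : ℝ) :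
    corrDeriv2 n (v + δ) (ℓ + μ) r = corrDeriv2 n v ℓ r + corrDeriv2 n δ μ r := by
  simp only [corrDeriv2, Pi.add_apply, mul_add, add_mul, sum_add_distrib]
  ring

lemma deriv_syDefiningFn (v : Fin n → ℝ) (ℓ : ℝ) {r : ℝ} (hr : r ≠ 0) :
    deriv (syDefiningFn n v ℓ) r = 1 + corrDeriv n v ℓ r := by
  rw [funext (syDefiningFn_apply v ℓ)]
  exact ((hasDerivAt_id' r).add (hasDerivAt_corr v ℓ hr)).deriv

lemma deriv_deriv_syDefiningFn (v : Fin n → ℝ) (ℓ : ℝ) {r : ℝ} (hr : r ≠ 0) :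
    deriv (deriv (syDefiningFn n v ℓ)) r = corrDeriv2 n v ℓ r := by
  have h : deriv (syDefiningFn n v ℓ) =ᶠ[𝓝 r] fun x => 1 + corrDeriv n v ℓ x := by
    filter_upwards [isOpen_ne.mem_nhds hr] with x hx using deriv_syDefiningFn v ℓ hx
  rw [h.deriv_eq]
  exact ((hasDerivAt_corrDeriv v ℓ hr).const_add 1).deriv

noncomputable def yamabeError (n : ℕ) (a ρ : ℝ → ℝ) (v : Fin n → ℝ) (ℓ r : ℝ) : ℝ :=
  (n * (n + 1) : ℝ) * (1 + corrDeriv n v ℓ r) ^ 2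
    - 2 * n * (r + corr n v ℓ r) * (corrDeriv2 n v ℓ r + a r * (1 + corrDeriv n v ℓ r))
    - (r + corr n v ℓ r) ^ 2 * ρ r - n * (n + 1)

lemma yamabeError_eventuallyEq (a ρ : ℝ → ℝ) (v : Fin n → ℝ) (ℓ : ℝ) :
    (fun r : ℝ =>
        (n * (n + 1) : ℝ) * (deriv (syDefiningFn n v ℓ) r) ^ 2
          - 2 * n * syDefiningFn n v ℓ r
            * (deriv (deriv (syDefiningFn n v ℓ)) r + a r * deriv (syDefiningFn n v ℓ) r)
          - (syDefiningFn n v ℓ r) ^ 2 * ρ r - n * (n + 1))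
      =ᶠ[𝓝[>] 0] yamabeError n a ρ v ℓ := by
  filter_upwards [self_mem_nhdsWithin] with r (hr : 0 < r)
  rw [deriv_syDefiningFn v ℓ hr.ne', deriv_deriv_syDefiningFn v ℓ hr.ne', syDefiningFn_apply,
    yamabeError]

lemma linearization_corr (δ : Fin n → ℝ) (μ r : ℝ) :
    (n + 1) * corrDeriv n δ μ r - r * corrDeriv2 n δ μ r
      = ∑ k : Fin n, (((k : ℕ) : ℝ) + 2) * (n - k) * δ k * r ^ ((k : ℕ) + 1)
        - (n + 2) * μ * r ^ (n + 1) := by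
  have hsum : ∑ k : Fin n, (((k : ℕ) : ℝ) + 2) * (n - k) * δ k * r ^ ((k : ℕ) + 1)
      = (n + 1) * ∑ k : Fin n, (((k : ℕ) : ℝ) + 2) * δ k * r ^ ((k : ℕ) + 1)
        - r * ∑ k : Fin n, (((k : ℕ) : ℝ) + 2) * (((k : ℕ) : ℝ) + 1) * δ k * r ^ ((k : ℕ) + 0) := by
    rw [mul_sum, mul_sum, ← sum_sub_distrib]
    exact sum_congr rfl fun k _ => by ring
  rw [hsum, corrDeriv, corrDeriv2]
  ring

def CorrIsBigO (n : ℕ) (v : Fin n → ℝ) (ℓ : ℝ) (ψ : ℝ → ℝ) : Prop :=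
  corr n v ℓ =O[𝓝[>] 0] (fun r => r ^ 2 * ψ r) ∧
    corrDeriv n v ℓ =O[𝓝[>] 0] (fun r => r * ψ r) ∧ corrDeriv2 n v ℓ =O[𝓝[>] 0] ψ

lemma CorrIsBigO.trans {v : Fin n → ℝ} {ℓ : ℝ} {ψ φ : ℝ → ℝ} (h : CorrIsBigO n v ℓ ψ)
    (hψ : ψ =O[𝓝[>] 0] φ) : CorrIsBigO n v ℓ φ :=
  ⟨h.1.trans ((isBigO_refl _ _).mul hψ), h.2.1.trans ((isBigO_refl _ _).mul hψ), h.2.2.trans hψ⟩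

lemma corrIsBigO_pow {v : Fin n → ℝ} {m : ℕ} (hm : m < n)
    (hv : ∀ k : Fin n, (k : ℕ) < m → v k = 0) (ℓ : ℝ) :
    CorrIsBigO n v ℓ fun r => r ^ m := by
  refine ⟨?_, ?_, ?_⟩
  · refine ((sum_mul_pow_isBigO hv 2).add
      ((pow_mul_log_isBigO_pow (i := n + 2) (j := m + 2) (by omega)).const_mul_left ℓ)).congr
      (fun r => rfl) (fun r => by ring)
  · have hc : ∀ k : Fin n, (k : ℕ) < m → (((k : ℕ) : ℝ) + 2) * v k = 0 := fun k hk => by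
      simp [hv k hk]
    refine ((sum_mul_pow_isBigO hc 1).add
      ((((pow_mul_log_isBigO_pow (i := n + 1) (j := m + 1) (by omega)).const_mul_left
        ((n : ℝ) + 2)).add (pow_isBigO_pow_of_le (i := n + 1) (by omega))).const_mul_left ℓ)).congr
      (fun r => by simp only [corrDeriv, mul_assoc]) (fun r => by ring)
  · have hc : ∀ k : Fin n, (k : ℕ) < m →
        (((k : ℕ) : ℝ) + 2) * (((k : ℕ) : ℝ) + 1) * v k = 0 := fun k hk => by
      simp [hv k hk]
    refine ((sum_mul_pow_isBigO hc 0).add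
      ((((pow_mul_log_isBigO_pow (i := n) (j := m + 0) hm).const_mul_left
        (((n : ℝ) + 2) * (n + 1))).add
        ((pow_isBigO_pow_of_le hm.le).const_mul_left (2 * (n : ℝ) + 3))).const_mul_left ℓ)).congr
      (fun r => by simp only [corrDeriv2, mul_assoc]) (fun r => rfl)

lemma corrIsBigO_log (μ : ℝ) : CorrIsBigO n 0 μ fun r => r ^ n * log r := by
  refine ⟨?_, ?_, ?_⟩
  · exact (isBigO_refl (fun r : ℝ => r ^ (n + 2) * log r) _).const_mul_left μ |>.congr
      (fun r => by simp [corr])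
      (fun r => by ring)
  · refine (((isBigO_refl (fun r : ℝ => r ^ (n + 1) * log r) _).const_mul_left ((n : ℝ) + 2)).add
      (pow_isBigO_pow_mul_log (n + 1))).const_mul_left μ |>.congr
      (fun r => by simp [corrDeriv, mul_assoc]) (fun r => by ring)
  · refine (((isBigO_refl (fun r : ℝ => r ^ n * log r) _).const_mul_left
      (((n : ℝ) + 2) * (n + 1))).add
      ((pow_isBigO_pow_mul_log n).const_mul_left (2 * (n : ℝ) + 3))).const_mul_left μ |>.congr
      (fun r => by simp [corrDeriv2, mul_assoc]) (fun r => rfl)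

lemma CorrIsBigO.isBigO_pow {v : Fin n → ℝ} {ℓ : ℝ} {ψ : ℝ → ℝ} (h : CorrIsBigO n v ℓ ψ)
    (hψ : ψ =O[𝓝[>] 0] fun _ => (1 : ℝ)) :
    corr n v ℓ =O[𝓝[>] 0] (fun r => r ^ 2) ∧ corrDeriv n v ℓ =O[𝓝[>] 0] (fun r => r) ∧
      corrDeriv2 n v ℓ =O[𝓝[>] 0] fun _ => (1 : ℝ) :=
  let ⟨h₀, h₁, h₂⟩ := h.trans hψ
  ⟨h₀.congr_right fun _ => mul_one _, h₁.congr_right fun _ => mul_one _, h₂⟩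

lemma contDiffOn_yamabeError_zero {k : WithTop ℕ∞} {a ρ : ℝ → ℝ} {s : Set ℝ}
    (ha : ContDiffOn ℝ k a s) (hρ : ContDiffOn ℝ k ρ s) (v : Fin n → ℝ) :
    ContDiffOn ℝ k (yamabeError n a ρ v 0) s := by
  have h₀ : ContDiff ℝ k (corr n v 0) := by
    unfold corr
    simp only [zero_mul, add_zero]
    fun_prop
  have h₁ : ContDiff ℝ k (corrDeriv n v 0) := by
    unfold corrDeriv
    simp only [zero_mul, add_zero]
    fun_prop
  have h₂ : ContDiff ℝ k (corrDeriv2 n v 0) := by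
    unfold corrDeriv2
    simp only [zero_mul, add_zero]
    fun_prop
  unfold yamabeError
  fun_prop

lemma yamabeError_zero_zero_isBigO {a ρ : ℝ → ℝ} (ha : a =O[𝓝[>] 0] fun _ => (1 : ℝ))
    (hρ : ρ =O[𝓝[>] 0] fun _ => (1 : ℝ)) :
    yamabeError n a ρ 0 0 =O[𝓝[>] 0] fun r => r := by
  refine (((ha.mul (isBigO_refl (fun r : ℝ => r) _)).const_mul_left (-2 * n : ℝ)).sub
    ((hρ.mul ((isBigO_refl (fun r : ℝ => r) _).mul id_isBigO_one)).congr_right fun r => by ring)).congr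
    (fun r => ?_) (fun r => by ring)
  simp only [yamabeError, corr, corrDeriv, corrDeriv2, Pi.zero_apply, zero_mul, sum_const_zero,
    add_zero, mul_zero, one_pow, mul_one]
  ring

section Solution

variable (hn : 1 ≤ n) {a ρ : ℝ → ℝ} (ha : a =O[𝓝[>] 0] fun _ => (1 : ℝ))
  (hρ : ρ =O[𝓝[>] 0] fun _ => (1 : ℝ))
include hn ha hρ

lemma yamabeError_add_sub_isBigO {δ : Fin n → ℝ} {μ : ℝ} {ψ : ℝ → ℝ}
    (hψ : ψ =O[𝓝[>] 0] fun _ => (1 : ℝ))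
    (hδ : CorrIsBigO n δ μ ψ) (v : Fin n → ℝ) (ℓ : ℝ) :
    (fun r => yamabeError n a ρ (v + δ) (ℓ + μ) r - yamabeError n a ρ v ℓ r
        - 2 * n * ((n + 1) * corrDeriv n δ μ r - r * corrDeriv2 n δ μ r))
      =O[𝓝[>] 0] fun r => r ^ 2 * ψ r := by
  have hr2 : (fun r : ℝ => r ^ 2) =O[𝓝[>] 0] fun r => r :=
    (pow_isBigO_pow_of_le (j := 1) (by norm_num)).congr_right fun r => pow_one r
  obtain ⟨g₀, g₁, g₂⟩ := (corrIsBigO_pow (v := v) hn (fun k hk => absurd hk k.val.not_lt_zero)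
    ℓ).isBigO_pow ((isBigO_refl _ _).congr_right fun r => pow_zero r)
  obtain ⟨d₀', d₁', -⟩ := hδ.isBigO_pow hψ
  obtain ⟨d₀, d₁, d₂⟩ := hδ
  have hf₀ : (fun r => r + corr n v ℓ r) =O[𝓝[>] 0] fun r => r :=
    (isBigO_refl _ _).add (g₀.trans hr2)
  have hf₁ : (fun r => 1 + corrDeriv n v ℓ r) =O[𝓝[>] 0] fun _ => (1 : ℝ) :=
    (isBigO_refl _ _).add (g₁.trans id_isBigO_one)
  -- Expanded, the remainder is `D₁ X₁ + D₂ X₂ + D₀ X₀`, where `Dᵢ` is the `i`-th derivative of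
  -- `corr n δ μ` and `X₁ = O(r)`, `X₂ = O(r²)`, `X₀ = O(1)`.
  have hX₁ : (fun r => 2 * n * (n + 1) * corrDeriv n v ℓ r + n * (n + 1) * corrDeriv n δ μ r
      - 2 * n * (a r * (r + corr n v ℓ r)) - 2 * n * (a r * corr n δ μ r))
      =O[𝓝[>] 0] fun r => r :=
    (((g₁.const_mul_left _).add (d₁'.const_mul_left _)).sub
      (((ha.mul hf₀).congr_right fun r => one_mul r).const_mul_left _)).sub
      (((ha.mul (d₀'.trans hr2)).congr_right fun r => one_mul r).const_mul_left _)
  have hX₂ : (fun r => -(2 * n) * corr n v ℓ r - 2 * n * corr n δ μ r)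
      =O[𝓝[>] 0] fun r => r ^ 2 :=
    (g₀.const_mul_left _).sub (d₀'.const_mul_left _)
  have hX₀ : (fun r => -(2 * n) * corrDeriv2 n v ℓ r - 2 * n * (a r * (1 + corrDeriv n v ℓ r))
      - ρ r * (2 * (r + corr n v ℓ r) + corr n δ μ r)) =O[𝓝[>] 0] fun _ => (1 : ℝ) :=
    ((g₂.const_mul_left _).sub (((ha.mul hf₁).congr_right fun r => one_mul 1).const_mul_left _)).sub
      ((hρ.mul (((hf₀.const_mul_left 2).add (d₀'.trans hr2)).trans id_isBigO_one)).congr_right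
        fun r => one_mul 1)
  have scale : ∀ {f g : ℝ → ℝ}, f =O[𝓝[>] 0] g → (∀ r, g r = r ^ 2 * ψ r) →
      f =O[𝓝[>] 0] fun r => r ^ 2 * ψ r := fun h hg => h.congr_right hg
  refine ((scale (d₁.mul hX₁) fun r => by ring).add (scale (d₂.mul hX₂) fun r => by ring)).add
    (scale (d₀.mul hX₀) fun r => by ring) |>.congr_left fun r => ?_
  simp only [yamabeError, corr_add, corrDeriv_add, corrDeriv2_add]
  ring

lemma yamabeError_add_sub_leading_isBigO {m : ℕ} (hm : m < n) {δ : Fin n → ℝ}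
    (hδ : ∀ k : Fin n, (k : ℕ) < m → δ k = 0) (v : Fin n → ℝ) (ℓ μ : ℝ) :
    (fun r => yamabeError n a ρ (v + δ) (ℓ + μ) r - yamabeError n a ρ v ℓ r
        - 2 * n * ((m + 2) * (n - m) * δ ⟨m, hm⟩) * r ^ (m + 1))
      =O[𝓝[>] 0] fun r => r ^ (m + 2) := by
  have hrem := yamabeError_add_sub_isBigO hn ha hρ
    ((pow_isBigO_pow_of_le (Nat.zero_le m)).congr_right fun r => pow_zero r)
    (corrIsBigO_pow hm hδ μ) v ℓ
  have hc : ∀ k : Fin n, (k : ℕ) < m → (((k : ℕ) : ℝ) + 2) * (n - k) * δ k = 0 :=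
    fun k hk => by simp [hδ k hk]
  have htail := sum_mul_pow_sub_isBigO hm hc 1
  have hlog := (pow_isBigO_pow_of_le (i := n + 1) (j := m + 2) (by omega)).const_mul_left
    ((n + 2) * μ)
  refine ((hrem.congr_right fun r => by ring).add
    ((htail.sub hlog).const_mul_left (2 * n : ℝ))).congr_left fun r => ?_
  rw [linearization_corr]
  ring

lemma yamabeError_add_log_isBigO (v : Fin n → ℝ) (ℓ μ : ℝ) :
    (fun r => yamabeError n a ρ v (ℓ + μ) r - yamabeError n a ρ v ℓ r
        + 2 * n * (n + 2) * μ * r ^ (n + 1))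
      =O[𝓝[>] 0] fun r => r ^ (n + 2) * log r := by
  have hrem := yamabeError_add_sub_isBigO hn ha hρ
    ((pow_mul_log_isBigO_pow hn).congr_right fun r => pow_zero r) (corrIsBigO_log μ) v ℓ
  refine (hrem.congr_right fun r => by ring).congr_left fun r => ?_
  rw [add_zero, linearization_corr]
  simp only [Pi.zero_apply, mul_zero, zero_mul, sum_const_zero]
  ring

lemma exists_yamabeError_zero_zero_isBigO_pow {b : ℝ} (hb : 0 < b)
    (hda : ContDiffOn ℝ (n + 2) a (Set.Icc 0 b)) (hdρ : ContDiffOn ℝ (n + 2) ρ (Set.Icc 0 b)) :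
    ∀ m ≤ n, ∃ v : Fin n → ℝ, yamabeError n a ρ v 0 =O[𝓝[>] 0] fun r => r ^ (m + 1) := by
  intro m
  induction m with
  | zero =>
    exact fun _ => ⟨0, (yamabeError_zero_zero_isBigO ha hρ).congr_right fun r => (pow_one r).symm⟩
  | succ m ih =>
    intro hm
    obtain ⟨v, hv⟩ := ih (by omega)
    obtain ⟨c, hc⟩ := exists_sub_const_mul_pow_isBigO hb
      ((contDiffOn_yamabeError_zero hda hdρ v).of_le (by norm_cast; omega)) hv
    have hnm : (n : ℝ) - m ≠ 0 := sub_ne_zero.2 (by exact_mod_cast (by omega : n ≠ m))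
    have hn₀ : (n : ℝ) ≠ 0 := Nat.cast_ne_zero.2 (by omega)
    obtain ⟨t, ht⟩ : ∃ t : ℝ, 2 * n * ((m + 2) * (n - m) * t) = -c :=
      ⟨-c / (2 * n * ((m + 2) * (n - m))), by field_simp⟩
    have hlead := yamabeError_add_sub_leading_isBigO hn ha hρ hm
      (δ := Pi.single (⟨m, hm⟩ : Fin n) t) (fun k hk => by simp [Fin.ext_iff, hk.ne]) v 0 0
    refine ⟨v + Pi.single ⟨m, hm⟩ t, (hlead.add hc).congr_left fun r => ?_⟩
    simp only [Pi.single_eq_same, add_zero]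
    linear_combination -r ^ (m + 1) * ht

lemma exists_yamabeError_isBigO {b : ℝ} (hb : 0 < b)
    (hda : ContDiffOn ℝ (n + 2) a (Set.Icc 0 b)) (hdρ : ContDiffOn ℝ (n + 2) ρ (Set.Icc 0 b)) :
    ∃ (v : Fin n → ℝ) (ℓ : ℝ), yamabeError n a ρ v ℓ =O[𝓝[>] 0] fun r => r ^ (n + 2) * log r := by
  obtain ⟨v, hv⟩ := exists_yamabeError_zero_zero_isBigO_pow hn ha hρ hb hda hdρ n le_rfl
  obtain ⟨c, hc⟩ := exists_sub_const_mul_pow_isBigO hb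
    (contDiffOn_yamabeError_zero hda hdρ v) hv
  obtain ⟨ℓ, hℓ⟩ : ∃ ℓ : ℝ, 2 * n * (n + 2) * ℓ = c :=
    ⟨c / (2 * n * (n + 2)), by field_simp [Nat.cast_ne_zero.2 (by omega : n ≠ 0)]⟩
  refine ⟨v, ℓ, ((yamabeError_add_log_isBigO hn ha hρ v 0 ℓ).add
    (hc.trans (pow_isBigO_pow_mul_log (n + 2)))).congr_left fun r => ?_⟩
  rw [zero_add]
  linear_combination r ^ (n + 1) * hℓ

lemma eq_of_yamabeError_isBigO {v v' : Fin n → ℝ} {ℓ ℓ' : ℝ}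
    (h : yamabeError n a ρ v ℓ =O[𝓝[>] 0] fun r => r ^ (n + 2) * log r)
    (h' : yamabeError n a ρ v' ℓ' =O[𝓝[>] 0] fun r => r ^ (n + 2) * log r) :
    v' = v ∧ ℓ' = ℓ := by
  have hdiff := h'.sub h
  have hcoeff : ∀ m (hm : m < n), (v' - v) ⟨m, hm⟩ = 0 := by
    intro m
    induction m using Nat.strong_induction_on with
    | _ m ih =>
      intro hm
      have hlead := yamabeError_add_sub_leading_isBigO hn ha hρ hm (fun k hk => ih k hk k.2) v ℓ (ℓ' - ℓ)
      rw [add_sub_cancel, add_sub_cancel] at hlead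
      have hK := eq_zero_of_const_mul_pow_isBigO
        (c := 2 * n * ((m + 2) * (n - m) * (v' - v) ⟨m, hm⟩))
        (((hdiff.trans (pow_mul_log_isBigO_pow (by omega))).sub hlead).congr_left fun r => by ring)
        ((isLittleO_pow_pow (Nat.lt_succ_self _)).mono nhdsWithin_le_nhds)
      have hnm : (n : ℝ) - m ≠ 0 := sub_ne_zero.2 (by exact_mod_cast hm.ne')
      simpa [hnm, Nat.cast_ne_zero.2 (by omega : n ≠ 0),
        show (m : ℝ) + 2 ≠ 0 by positivity] using hK
  have hv : v' = v := sub_eq_zero.1 (funext fun k => hcoeff k k.2)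
  rw [hv] at hdiff
  have hlog := yamabeError_add_log_isBigO hn ha hρ v ℓ (ℓ' - ℓ)
  rw [add_sub_cancel] at hlog
  have hK := eq_zero_of_const_mul_pow_isBigO (c := 2 * n * (n + 2) * (ℓ' - ℓ))
    ((hlog.sub hdiff).congr_left fun r => by ring) (pow_succ_mul_log_isLittleO_pow (n + 1))
  refine ⟨hv, sub_eq_zero.1 ?_⟩
  simpa [Nat.cast_ne_zero.2 (by omega : n ≠ 0),
    show (n : ℝ) + 2 ≠ 0 by positivity] using hK

end Solution

end SingularYamabe

/-- radial formal solvability of the singular Yamabe problem: there exist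
unique coefficients `u₂, …, u_{n+1}, ℓ` such that `u = r + u₂r² + ⋯ + ℓ r^{n+2} log r`
satisfies `n(n+1)(u')² − 2nu(u'' + a u') − u²ρ − n(n+1) = O(r^{n+2} log r)` as `r → 0⁺`. -/
theorem stmt13 (n : ℕ) (hn : 1 ≤ n) (a ρ : ℝ → ℝ) (U : Set ℝ)
    (hUo : IsOpen U) (hU0 : (0 : ℝ) ∈ U)
    (ha : ContDiffOn ℝ (⊤ : ℕ∞) a U) (hρ : ContDiffOn ℝ (⊤ : ℕ∞) ρ U) :
    ∃! vl : (Fin n → ℝ) × ℝ,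
      (fun r : ℝ =>
          (n * (n + 1) : ℝ) * (deriv (syDefiningFn n vl.1 vl.2) r) ^ 2
            - 2 * n * syDefiningFn n vl.1 vl.2 r
              * (deriv (deriv (syDefiningFn n vl.1 vl.2)) r
                  + a r * deriv (syDefiningFn n vl.1 vl.2) r)
            - (syDefiningFn n vl.1 vl.2 r) ^ 2 * ρ r - n * (n + 1))
        =O[𝓝[>] 0] fun r => r ^ (n + 2) * Real.log r := by
  have bounded : ∀ f : ℝ → ℝ, ContDiffOn ℝ (⊤ : ℕ∞) f U → f =O[𝓝[>] 0] fun _ => (1 : ℝ) :=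
    fun f hf => ((hf.continuousOn.continuousAt (hUo.mem_nhds hU0)).tendsto.mono_left
      nhdsWithin_le_nhds).isBigO_one ℝ
  obtain ⟨ε, hε, hball⟩ := Metric.isOpen_iff.1 hUo 0 hU0
  have hIcc : Set.Icc 0 (ε / 2) ⊆ U := fun x hx => hball <| by
    rw [Metric.mem_ball, Real.dist_0_eq_abs, abs_of_nonneg hx.1]
    linarith [hx.2]
  have smooth : ∀ f : ℝ → ℝ, ContDiffOn ℝ (⊤ : ℕ∞) f U →
      ContDiffOn ℝ (n + 2) f (Set.Icc 0 (ε / 2)) := fun f hf =>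
    (hf.mono hIcc).of_le (WithTop.coe_le_coe.2 (le_top : ((n + 2 : ℕ) : ℕ∞) ≤ ⊤))
  have ha₁ := bounded a ha
  have hρ₁ := bounded ρ hρ
  obtain ⟨v, ℓ, h⟩ := SingularYamabe.exists_yamabeError_isBigO hn ha₁ hρ₁ (half_pos hε)
    (smooth a ha) (smooth ρ hρ)
  refine ⟨(v, ℓ), h.congr' (SingularYamabe.yamabeError_eventuallyEq a ρ v ℓ).symm .rfl, ?_⟩
  rintro ⟨v', ℓ'⟩ h'
  obtain ⟨rfl, rfl⟩ := SingularYamabe.eq_of_yamabeError_isBigO hn ha₁ hρ₁ h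
    (h'.congr' (SingularYamabe.yamabeError_eventuallyEq a ρ v' ℓ') .rfl)
  rfl
end

section
/- Let n ≥ 1 be an integer, let b be a C^{n+1} real-valued function on a neighborhood of 0 in ℝ with b(0) > 0, and let v₀, v₁, …, v_n be real numbers. Then there exist real numbers c₁, …, c_n and C such that Σ_{k=0}^{n−1} (v_k/(k−n))·ε^{k−n}·(b(ε)^{k−n} − 1) + v_n·log b(ε) − Σ_{j=1}^{n} c_j·ε^{−j} converges to C as ε → 0⁺. In particular this expression contains no log(1/ε) term, so the log-term coefficient 𝓔 = ∫_Σ v^{(n)} dv in the renormalized volume expansion is unchanged under conformal rescaling of the background metric. -/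
/-!
Taylor's theorem with remainder `O(ε^(m+1))`, applied to `b⁻ᵐ - 1` with `m = n - k`, writes
`ε^(-m) (b(ε)^(-m) - 1)` as a polynomial in `ε⁻¹` plus a remainder `O(ε)`; and `log b(ε)`
converges because `b(0) > 0`. Expansions "finitely many negative powers of `ε` plus a convergent
term" are closed under linear combinations, so the whole expression has one, and in particular
no `log ε` term.
-/

open Topology Filter

/-- The constant `C` is the Hadamard finite part of `f` at `0⁺`. -/
def HasFinitePart (m : ℕ) (f : ℝ → ℝ) : Prop :=
  ∃ (c : ℕ → ℝ) (C : ℝ), Tendsto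
    (fun ε : ℝ => f ε - ∑ j ∈ Finset.range m, c j * ε ^ (-((j : ℤ) + 1))) (𝓝[>] 0) (𝓝 C)

namespace HasFinitePart

variable {m : ℕ} {f g : ℝ → ℝ}

theorem congr (hf : HasFinitePart m f) (hfg : f =ᶠ[𝓝[>] 0] g) : HasFinitePart m g := by
  obtain ⟨c, C, h⟩ := hf
  refine ⟨c, C, h.congr' ?_⟩
  filter_upwards [hfg] with ε hε
  rw [hε]

theorem of_tendsto {C : ℝ} (hf : Tendsto f (𝓝[>] 0) (𝓝 C)) : HasFinitePart m f :=
  ⟨0, C, by simpa using hf⟩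

theorem add (hf : HasFinitePart m f) (hg : HasFinitePart m g) : HasFinitePart m (f + g) := by
  obtain ⟨c, C, hc⟩ := hf
  obtain ⟨d, D, hd⟩ := hg
  refine ⟨c + d, C + D, (hc.add hd).congr fun ε => ?_⟩
  simp only [Pi.add_apply, add_mul, Finset.sum_add_distrib]
  ring

theorem const_mul (a : ℝ) (hf : HasFinitePart m f) : HasFinitePart m (fun ε => a * f ε) := by
  obtain ⟨c, C, hc⟩ := hf
  refine ⟨a • c, a * C, (hc.const_mul a).congr fun ε => ?_⟩
  simp only [Pi.smul_apply, smul_eq_mul, mul_sub, Finset.mul_sum, mul_assoc]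

theorem sum {ι : Type*} (s : Finset ι) {f : ι → ℝ → ℝ} (hf : ∀ i ∈ s, HasFinitePart m (f i)) :
    HasFinitePart m (fun ε => ∑ i ∈ s, f i ε) := by
  classical
  induction s using Finset.induction_on with
  | empty => simpa using of_tendsto (m := m) (tendsto_const_nhds (x := (0 : ℝ)))
  | insert i s hi ih =>
    simp_rw [Finset.sum_insert hi]
    exact (hf i (s.mem_insert_self i)).add (ih fun j hj => hf j (Finset.mem_insert_of_mem hj))

theorem mono {m' : ℕ} (hf : HasFinitePart m f) (hm : m ≤ m') : HasFinitePart m' f := by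
  obtain ⟨c, C, hc⟩ := hf
  refine ⟨fun j => if j < m then c j else 0, C, hc.congr fun ε => ?_⟩
  congr 1
  calc ∑ j ∈ Finset.range m, c j * ε ^ (-((j : ℤ) + 1))
      = ∑ j ∈ Finset.range m, (if j < m then c j else 0) * ε ^ (-((j : ℤ) + 1)) :=
        Finset.sum_congr rfl fun j hj => by rw [if_pos (Finset.mem_range.1 hj)]
    _ = _ := Finset.sum_subset (Finset.range_subset_range.2 hm) fun j _ hj => by
        rw [if_neg (Finset.mem_range.not.1 hj), zero_mul]

end HasFinitePart

open HasFinitePart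

theorem hasFinitePart_sum_pow_mul_zpow (m : ℕ) (a : ℕ → ℝ) :
    HasFinitePart m (fun ε => (∑ i ∈ Finset.range (m + 1), a i * ε ^ i) * ε ^ (-(m : ℤ))) := by
  refine ⟨fun j => a (m - 1 - j), a m, tendsto_const_nhds.congr' ?_⟩
  filter_upwards [self_mem_nhdsWithin] with ε (hε : 0 < ε)
  have hreflect : ∑ j ∈ Finset.range m, a (m - 1 - j) * ε ^ (-((j : ℤ) + 1))
      = ∑ i ∈ Finset.range m, a i * ε ^ ((i : ℤ) - m) := by
    rw [← Finset.sum_range_reflect (fun i => a i * ε ^ ((i : ℤ) - m))]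
    refine Finset.sum_congr rfl fun j hj => ?_
    have : ((m - 1 - j : ℕ) : ℤ) - m = -((j : ℤ) + 1) := by
      have := Finset.mem_range.1 hj; omega
    rw [this]
  have hshift : ∀ i : ℕ, a i * ε ^ i * ε ^ (-(m : ℤ)) = a i * ε ^ ((i : ℤ) - m) := fun i => by
    rw [mul_assoc, ← zpow_natCast, ← zpow_add₀ hε.ne', sub_eq_add_neg]
  rw [hreflect, Finset.sum_range_succ, add_mul, Finset.sum_mul, hshift, sub_self, zpow_zero]
  simp only [hshift]
  ring

theorem tendsto_mul_zpow_neg_of_norm_le {r : ℝ → ℝ} {m : ℕ} {K : ℝ}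
    (hr : ∀ᶠ ε in 𝓝[>] 0, ‖r ε‖ ≤ K * ε ^ (m + 1)) :
    Tendsto (fun ε => r ε * ε ^ (-(m : ℤ))) (𝓝[>] 0) (𝓝 0) := by
  refine squeeze_zero_norm' (a := fun ε => K * ε) ?_
    (((continuous_const_mul K).tendsto' 0 0 (mul_zero K)).mono_left nhdsWithin_le_nhds)
  filter_upwards [hr, self_mem_nhdsWithin] with ε hrε (hε : 0 < ε)
  have hpow : 0 < ε ^ (-(m : ℤ)) := zpow_pos hε _
  calc ‖r ε * ε ^ (-(m : ℤ))‖ = ‖r ε‖ * ε ^ (-(m : ℤ)) := by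
        rw [norm_mul, Real.norm_of_nonneg hpow.le]
    _ ≤ K * ε ^ (m + 1) * ε ^ (-(m : ℤ)) := mul_le_mul_of_nonneg_right hrε hpow.le
    _ = K * ε := by
        rw [mul_assoc, ← zpow_natCast, ← zpow_add₀ hε.ne']
        push_cast
        simp

theorem hasFinitePart_mul_zpow_of_contDiffOn {m : ℕ} {δ : ℝ} (hδ : 0 < δ) {g : ℝ → ℝ}
    (hg : ContDiffOn ℝ (m + 1) g (Set.Icc 0 δ)) :
    HasFinitePart m (fun ε => g ε * ε ^ (-(m : ℤ))) := by
  set T := taylorWithinEval g m (Set.Icc 0 δ) 0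
  obtain ⟨K, hK⟩ := exists_taylor_mean_remainder_bound hδ.le hg
  have hremainder : Tendsto (fun ε => (g ε - T ε) * ε ^ (-(m : ℤ))) (𝓝[>] 0) (𝓝 0) := by
    refine tendsto_mul_zpow_neg_of_norm_le (K := K) ?_
    filter_upwards [Ioc_mem_nhdsGT hδ] with ε hε
    simpa using hK ε (Set.Ioc_subset_Icc_self hε)
  have htaylor : HasFinitePart m (fun ε => T ε * ε ^ (-(m : ℤ))) := by
    refine (hasFinitePart_sum_pow_mul_zpow m
      fun i => (i.factorial : ℝ)⁻¹ * iteratedDerivWithin i g (Set.Icc 0 δ) 0).congr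
      (Eventually.of_forall fun ε => ?_)
    simp only [T, taylor_within_apply, sub_zero, smul_eq_mul]
    congr 1
    exact Finset.sum_congr rfl fun i _ => by ring
  refine ((of_tendsto hremainder).add htaylor).congr (Eventually.of_forall fun ε => ?_)
  simp only [Pi.add_apply]
  ring

theorem hasFinitePart_zpow_mul_zpow_sub_one {m : ℕ} {δ : ℝ} (hδ : 0 < δ) {b : ℝ → ℝ}
    (hb : ContDiffOn ℝ (m + 1) b (Set.Icc 0 δ)) (hb0 : ∀ x ∈ Set.Icc 0 δ, b x ≠ 0) :
    HasFinitePart m (fun ε => ε ^ (-(m : ℤ)) * (b ε ^ (-(m : ℤ)) - 1)) := by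
  have hg : ContDiffOn ℝ (m + 1) (fun x => (b x ^ m)⁻¹ - 1) (Set.Icc 0 δ) :=
    ((hb.pow m).inv fun x hx => pow_ne_zero m (hb0 x hx)).sub contDiffOn_const
  refine (hasFinitePart_mul_zpow_of_contDiffOn hδ hg).congr (Eventually.of_forall fun ε => ?_)
  simp only [zpow_neg, zpow_natCast]
  ring

theorem stmt14_general (n : ℕ) (b : ℝ → ℝ) (U : Set ℝ)
    (hUo : IsOpen U) (hU0 : (0 : ℝ) ∈ U)
    (hb : ContDiffOn ℝ ((n : ℕ∞) + 1) b U) (hb0 : 0 < b 0)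
    (v : ℕ → ℝ) :
    ∃ (c : Fin n → ℝ) (C : ℝ),
      Filter.Tendsto (fun ε : ℝ =>
          (∑ k : Fin n, (v k / ((k : ℝ) - n)) * ε ^ (((k : ℕ) : ℤ) - (n : ℤ))
              * ((b ε) ^ (((k : ℕ) : ℤ) - (n : ℤ)) - 1))
            + v n * Real.log (b ε)
            - ∑ j : Fin n, c j * ε ^ (-(((j : ℕ) : ℤ) + 1)))
        (𝓝[>] 0) (𝓝 C) := by
  have hcont : ContinuousAt b 0 := hb.continuousOn.continuousAt (hUo.mem_nhds hU0)
  obtain ⟨δ, hδ, hsub⟩ : ∃ δ, 0 < δ ∧ Set.Icc 0 δ ⊆ U ∩ {x | b x ≠ 0} :=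
    mem_nhdsGE_iff_exists_Icc_subset.1 <| nhdsWithin_le_nhds <|
      inter_mem (hUo.mem_nhds hU0) (hcont.eventually_ne hb0.ne')
  have hbδ : ContDiffOn ℝ (n + 1) b (Set.Icc 0 δ) := hb.mono fun x hx => (hsub hx).1
  have hterm (k : Fin n) : HasFinitePart n
      (fun ε => ε ^ (((k : ℕ) : ℤ) - n) * (b ε ^ (((k : ℕ) : ℤ) - n) - 1)) := by
    have hk : ((k : ℕ) : ℤ) - n = -((n - k : ℕ) : ℤ) := by omega
    rw [hk]
    refine (hasFinitePart_zpow_mul_zpow_sub_one hδ (hbδ.of_le ?_) fun x hx => (hsub hx).2).mono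
      (Nat.sub_le n k)
    exact_mod_cast Nat.add_le_add_right (Nat.sub_le n k) 1
  have hlog : HasFinitePart n (fun ε => v n * Real.log (b ε)) :=
    of_tendsto <| tendsto_nhdsWithin_of_tendsto_nhds <|
      ((Real.continuousAt_log hb0.ne').comp hcont).tendsto.const_mul (v n)
  obtain ⟨c, C, h⟩ :=
    (HasFinitePart.sum Finset.univ fun k _ => (hterm k).const_mul (v k / ((k : ℝ) - n))).add hlog
  refine ⟨fun j => c j, C, h.congr fun ε => ?_⟩
  simp only [Pi.add_apply, Fin.sum_univ_eq_sum_range (fun j => c j * ε ^ (-((j : ℤ) + 1))),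
    mul_assoc]

/-- the pointwise core of the conformal invariance of the singular Yamabe
energy: for `b` of class `C^{n+1}` near 0 with `b(0) > 0`, the expression
`Σ_{k<n} (v_k/(k−n)) ε^{k−n}(b(ε)^{k−n} − 1) + v_n log b(ε)`
differs from a finite sum of pure powers `Σ_j c_j ε^{−j}` by a term converging
as `ε → 0⁺`; in particular it carries no `log(1/ε)` term. -/
theorem stmt14 (n : ℕ) (hn : 1 ≤ n) (b : ℝ → ℝ) (U : Set ℝ)
    (hUo : IsOpen U) (hU0 : (0 : ℝ) ∈ U)
    (hb : ContDiffOn ℝ ((n : ℕ∞) + 1) b U) (hb0 : 0 < b 0)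
    (v : ℕ → ℝ) :
    ∃ (c : Fin n → ℝ) (C : ℝ),
      Filter.Tendsto (fun ε : ℝ =>
          (∑ k : Fin n, (v k / ((k : ℝ) - n)) * ε ^ (((k : ℕ) : ℤ) - (n : ℤ))
              * ((b ε) ^ (((k : ℕ) : ℤ) - (n : ℤ)) - 1))
            + v n * Real.log (b ε)
            - ∑ j : Fin n, c j * ε ^ (-(((j : ℕ) : ℤ) + 1)))
        (𝓝[>] 0) (𝓝 C) :=
  stmt14_general n b U hUo hU0 hb hb0 v
end
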